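/- arXiv:quant-ph/9706027 — 7 statements merged into one kernel-verified Lean document; each statement's English description precedes it below -/
import Mathlib

section
/- Let n be a nonempty finite type and ι a finite type. Let (E i)_{i : ι} be a resolution of the identity on Matrix n n ℂ. Let T and (T i)_{i : ι} be positive linear maps on Matrix n n ℂ such that (1) T = ∑ i, T i, (2) trace (T ρ) = trace ρ for every matrix ρ, and (3) trace (T i ρ) = trace ((E i) * ρ) for every i and every matrix ρ. Then for every i and every matrix ρ one has T i ρ = T ((E i) * ρ) = T (ρ * (E i)) = T ((E i) * ρ * (E i)). -/
open scoped ComplexOrder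

namespace OperationalAux

open Matrix

variable {n : Type*} [Fintype n] [DecidableEq n]

/-- If `c + t • d ≥ 0` for all real `t`, then `d = 0`. -/
lemma coef_eq_zero_of_forall_nonneg (c d : ℂ) (h : ∀ t : ℝ, 0 ≤ c + (t : ℂ) * d) :
    d = 0 := by
  have him : ∀ t : ℝ, c.im + t * d.im = 0 := by
    intro t
    have := (Complex.nonneg_iff.mp (h t)).2
    simpa [Complex.add_im, Complex.mul_im] using this.symm
  have hc : c.im = 0 := by simpa using him 0
  have hdim : d.im = 0 := by
    have := him 1; rw [hc] at this; simpa using this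
  have hdre : d.re = 0 := by
    by_contra hd0
    have h1 := (Complex.nonneg_iff.mp (h ((-c.re - 1) / d.re))).1
    have : c.re + (-c.re - 1) / d.re * d.re = -1 := by
      rw [div_mul_cancel₀ _ hd0]; ring
    simp only [Complex.add_re, Complex.mul_re, Complex.ofReal_re, Complex.ofReal_im,
      zero_mul, sub_zero] at h1
    rw [this] at h1
    linarith
  exact Complex.ext hdre hdim

/-- A matrix whose quadratic form vanishes identically is zero (over ℂ). -/
lemma eq_zero_of_forall_dotProduct_eq_zero (M : Matrix n n ℂ)
    (h : ∀ x : n → ℂ, star x ⬝ᵥ M *ᵥ x = 0) : M = 0 := by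
  have key : Matrix.toEuclideanLin M = 0 := by
    rw [← inner_map_self_eq_zero]
    intro x
    have h' := congrArg star (h ((WithLp.equiv 2 (n → ℂ)) x))
    rw [star_zero] at h'
    rw [← h']
    rw [PiLp.inner_apply]
    simp only [RCLike.inner_apply, dotProduct, star_sum, star_mul', star_star,
      Pi.star_apply, starRingEnd_apply]
    refine Finset.sum_congr rfl fun i _ => ?_
    rfl
  have := congrArg Matrix.toEuclideanLin.symm key
  simpa using this

/-- A positive semidefinite matrix with zero trace is zero. -/
lemma psd_eq_zero_of_trace_eq_zero {M : Matrix n n ℂ} (hM : M.PosSemidef)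
    (h : M.trace = 0) : M = 0 := by
  exact hM.trace_eq_zero_iff.mp h

/-- The rank-one matrix `x xᴴ` is positive semidefinite. -/
lemma posSemidef_vecMulVec_star (x : n → ℂ) :
    (Matrix.vecMulVec x (star x)).PosSemidef := by
  rw [Matrix.vecMulVec_eq Unit]
  have hct : (Matrix.replicateCol Unit x)ᴴ = Matrix.replicateRow Unit (star x) := by
    ext i j; simp [Matrix.conjTranspose_apply]
  rw [← hct]
  exact Matrix.posSemidef_self_mul_conjTranspose _

set_option synthInstance.maxHeartbeats 1000000 in
/-- The positive semidefinite matrices span all matrices over ℂ. -/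
lemma span_posSemidef :
    Submodule.span ℂ {A : Matrix n n ℂ | A.PosSemidef} = ⊤ := by
  rw [eq_top_iff]
  intro A _
  rw [Matrix.matrix_eq_sum_single A]
  apply Submodule.sum_mem
  intro k _
  apply Submodule.sum_mem
  intro l _
  rw [show Matrix.single k l (A k l) = A k l • Matrix.single k l (1 : ℂ) by
    rw [Matrix.smul_single, smul_eq_mul, mul_one]]
  apply Submodule.smul_mem
  set S := {A : Matrix n n ℂ | A.PosSemidef}
  have hmem : ∀ x : n → ℂ, Matrix.vecMulVec x (star x) ∈ Submodule.span ℂ S :=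
    fun x => Submodule.subset_span (posSemidef_vecMulVec_star x)
  by_cases hkl : k = l
  · subst hkl
    have hk : Matrix.single k k (1 : ℂ) =
        Matrix.vecMulVec (Pi.single k (1:ℂ)) (star (Pi.single k (1:ℂ))) := by
      ext i j
      simp only [Matrix.single, Matrix.of_apply, Matrix.vecMulVec_apply,
        Pi.star_apply, Pi.single_apply]
      by_cases hik : k = i <;> by_cases hjk : k = j <;> simp [hik, hjk] <;> aesop
    rw [hk]; exact hmem _
  · have key : Matrix.single k l (1 : ℂ) =
        (1/2 : ℂ) • (Matrix.vecMulVec (Pi.single k (1:ℂ) + Pi.single l (1:ℂ))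
            (star (Pi.single k (1:ℂ) + Pi.single l (1:ℂ)))
          - Matrix.vecMulVec (Pi.single k (1:ℂ)) (star (Pi.single k (1:ℂ)))
          - Matrix.vecMulVec (Pi.single l (1:ℂ)) (star (Pi.single l (1:ℂ))))
        + (Complex.I / 2) • (Matrix.vecMulVec
              (Pi.single k (1:ℂ) + Pi.single l Complex.I)
              (star (Pi.single k (1:ℂ) + Pi.single l Complex.I))
          - Matrix.vecMulVec (Pi.single k (1:ℂ)) (star (Pi.single k (1:ℂ)))
          - Matrix.vecMulVec (Pi.single l (1:ℂ)) (star (Pi.single l (1:ℂ)))) := by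
      ext i j
      simp only [Matrix.single, Matrix.of_apply, Matrix.add_apply,
        Matrix.smul_apply, Matrix.sub_apply, Matrix.vecMulVec_apply, Pi.star_apply,
        Pi.add_apply, Pi.single_apply, smul_eq_mul, star_add, star_one, star_zero,
        apply_ite (star : ℂ → ℂ), Complex.star_def, Complex.conj_I,
        _root_.map_one, _root_.map_zero]
      by_cases hik : i = k <;> by_cases hil : i = l <;> by_cases hjk : j = k <;>
        by_cases hjl : j = l <;>
        simp_all [hkl, Ne.symm hkl] <;> (try (ring_nf <;> norm_num)) <;>
        (try simp_all [eq_comm])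
    rw [key]
    exact Submodule.add_mem _
      (Submodule.smul_mem _ _ (Submodule.sub_mem _
        (Submodule.sub_mem _ (hmem _) (hmem _)) (hmem _)))
      (Submodule.smul_mem _ _ (Submodule.sub_mem _
        (Submodule.sub_mem _ (hmem _) (hmem _)) (hmem _)))

/-- Two linear maps agreeing on positive semidefinite matrices agree everywhere. -/
lemma linearMap_ext_of_psd {F G : Matrix n n ℂ →ₗ[ℂ] Matrix n n ℂ}
    (h : ∀ ρ : Matrix n n ℂ, ρ.PosSemidef → F ρ = G ρ) : F = G :=
  LinearMap.ext_on span_posSemidef (fun ρ hρ => h ρ hρ)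

/-- Extension from PSD matrices, for "sandwiched" linear maps. -/
lemma sandwich_ext {F G : Matrix n n ℂ →ₗ[ℂ] Matrix n n ℂ} (A B C D : Matrix n n ℂ)
    (h : ∀ ρ : Matrix n n ℂ, ρ.PosSemidef → F (A * ρ * B) = G (C * ρ * D)) :
    ∀ ρ : Matrix n n ℂ, F (A * ρ * B) = G (C * ρ * D) := by
  have key : F.comp ((LinearMap.mulRight ℂ B).comp (LinearMap.mulLeft ℂ A)) =
      G.comp ((LinearMap.mulRight ℂ D).comp (LinearMap.mulLeft ℂ C)) := by
    apply linearMap_ext_of_psd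
    intro ρ hρ
    simpa only [LinearMap.comp_apply, LinearMap.mulRight_apply,
      LinearMap.mulLeft_apply] using h ρ hρ
  intro ρ
  have := LinearMap.congr_fun key ρ
  simpa only [LinearMap.comp_apply, LinearMap.mulRight_apply,
    LinearMap.mulLeft_apply] using this

/-- Key cancellation lemma: if `S` is a positive map, `ρ` is PSD and
`S (Q ρ Qᴴ) = 0`, then the cross terms vanish. -/
lemma cross_terms_eq_zero (S : Matrix n n ℂ →ₗ[ℂ] Matrix n n ℂ)
    (hS : ∀ ρ : Matrix n n ℂ, ρ.PosSemidef → (S ρ).PosSemidef)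
    (P Q ρ : Matrix n n ℂ) (hρ : ρ.PosSemidef)
    (hQ : S (Q * ρ * Qᴴ) = 0) :
    S (P * ρ * Qᴴ) = 0 ∧ S (Q * ρ * Pᴴ) = 0 := by
  have key : ∀ z : ℂ, (S (P * ρ * Pᴴ) + (starRingEnd ℂ z) • S (P * ρ * Qᴴ)
      + z • S (Q * ρ * Pᴴ)).PosSemidef := by
    intro z
    have hpsd := hS _ (hρ.mul_mul_conjTranspose_same (P + z • Q))
    have hexp : (P + z • Q) * ρ * (P + z • Q)ᴴ =
        P * ρ * Pᴴ + (starRingEnd ℂ z) • (P * ρ * Qᴴ) + z • (Q * ρ * Pᴴ)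
          + (starRingEnd ℂ z * z) • (Q * ρ * Qᴴ) := by
      simp only [conjTranspose_add, conjTranspose_smul, add_mul, mul_add,
        smul_add, smul_mul_assoc, mul_smul_comm, smul_smul, starRingEnd_apply]
      abel
    rw [hexp] at hpsd
    rw [_root_.map_add, _root_.map_add, _root_.map_add, _root_.map_smul,
      _root_.map_smul, _root_.map_smul, hQ, smul_zero, add_zero] at hpsd
    exact hpsd
  have main : ∀ x : n → ℂ, star x ⬝ᵥ S (P * ρ * Qᴴ) *ᵥ x = 0 ∧
      star x ⬝ᵥ S (Q * ρ * Pᴴ) *ᵥ x = 0 := by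
    intro x
    set c : ℂ := star x ⬝ᵥ S (P * ρ * Pᴴ) *ᵥ x with hc
    set a : ℂ := star x ⬝ᵥ S (P * ρ * Qᴴ) *ᵥ x with ha
    set b : ℂ := star x ⬝ᵥ S (Q * ρ * Pᴴ) *ᵥ x with hb
    have hform : ∀ z : ℂ, 0 ≤ c + (starRingEnd ℂ z) * a + z * b := by
      intro z
      have h0 := (key z).dotProduct_mulVec_nonneg x
      simpa [Matrix.add_mulVec, Matrix.smul_mulVec, dotProduct_add,
        dotProduct_smul, smul_eq_mul, hc, ha, hb] using h0
    have hab : a + b = 0 := by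
      apply coef_eq_zero_of_forall_nonneg c
      intro t
      have heq : c + (t : ℂ) * (a + b)
          = c + (starRingEnd ℂ (t : ℂ)) * a + (t : ℂ) * b := by
        rw [Complex.conj_ofReal]; ring
      rw [heq]
      exact hform _
    have hab2 : Complex.I * (b - a) = 0 := by
      apply coef_eq_zero_of_forall_nonneg c
      intro t
      have heq : c + (t : ℂ) * (Complex.I * (b - a))
          = c + (starRingEnd ℂ ((t : ℂ) * Complex.I)) * a
            + ((t : ℂ) * Complex.I) * b := by
        rw [_root_.map_mul, Complex.conj_ofReal, Complex.conj_I]; ring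
      rw [heq]
      exact hform _
    have hba : b = a := by
      rcases mul_eq_zero.mp hab2 with h0 | h0
      · exact absurd h0 Complex.I_ne_zero
      · linear_combination h0
    have ha0 : a = 0 := by
      have h2 : (2 : ℂ) * a = 0 := by rw [hba] at hab; linear_combination hab
      exact (mul_eq_zero.mp h2).resolve_left two_ne_zero
    exact ⟨ha0, hba.trans ha0⟩
  exact ⟨eq_zero_of_forall_dotProduct_eq_zero _ fun x => (main x).1,
    eq_zero_of_forall_dotProduct_eq_zero _ fun x => (main x).2⟩

end OperationalAux

open scoped ComplexOrder
open Matrix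

/-- Theorem 1/2 of the paper: the operational distribution is uniquely
determined by the operation (Schrödinger picture, finite dimension). -/
theorem operational_distribution_from_operation
    {n ι : Type*} [Fintype n] [DecidableEq n] [Nonempty n] [Fintype ι]
    (E : ι → Matrix n n ℂ)
    (hE_herm : ∀ i, (E i).IsHermitian)
    (hE_idem : ∀ i, E i * E i = E i)
    (hE_orth : ∀ i j, i ≠ j → E i * E j = 0)
    (hE_sum : ∑ i, E i = 1)
    (T : Matrix n n ℂ →ₗ[ℂ] Matrix n n ℂ)
    (Ti : ι → (Matrix n n ℂ →ₗ[ℂ] Matrix n n ℂ))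
    (hT_pos : ∀ ρ : Matrix n n ℂ, ρ.PosSemidef → (T ρ).PosSemidef)
    (hTi_pos : ∀ i, ∀ ρ : Matrix n n ℂ, ρ.PosSemidef → (Ti i ρ).PosSemidef)
    (hsum : T = ∑ i, Ti i)
    (htr : ∀ ρ : Matrix n n ℂ, (T ρ).trace = ρ.trace)
    (htri : ∀ i, ∀ ρ : Matrix n n ℂ, (Ti i ρ).trace = (E i * ρ).trace) :
    ∀ i, ∀ ρ : Matrix n n ℂ,
      Ti i ρ = T (E i * ρ) ∧ Ti i ρ = T (ρ * E i) ∧ Ti i ρ = T (E i * ρ * E i) := by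
  intro i
  classical
  set Q : Matrix n n ℂ := 1 - E i with hQdef
  have hPherm : (E i)ᴴ = E i := (hE_herm i).eq
  have hQherm : Qᴴ = Q := by
    rw [hQdef, Matrix.conjTranspose_sub, Matrix.conjTranspose_one, hPherm]
  have hPQ : E i * Q = 0 := by
    rw [hQdef, mul_sub, mul_one, hE_idem i, sub_self]
  have hQP : Q * E i = 0 := by
    rw [hQdef, sub_mul, one_mul, hE_idem i, sub_self]
  have hPQsum : E i + Q = 1 := by rw [hQdef]; abel
  -- Step A : Ti i kills Q ρ Q
  have hA : ∀ ρ : Matrix n n ℂ, ρ.PosSemidef → Ti i (Q * ρ * Q) = 0 := by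
    intro ρ hρ
    have hpsd : (Q * ρ * Q).PosSemidef := by
      have := hρ.mul_mul_conjTranspose_same Q
      rwa [hQherm] at this
    apply OperationalAux.psd_eq_zero_of_trace_eq_zero (hTi_pos i _ hpsd)
    rw [htri i]
    have h0 : E i * (Q * ρ * Q) = 0 := by
      simp only [← Matrix.mul_assoc]
      rw [hPQ, Matrix.zero_mul, Matrix.zero_mul]
    rw [h0, Matrix.trace_zero]
  -- Step A' : Ti j kills (E i) ρ (E i) for j ≠ i
  have hA' : ∀ j, j ≠ i → ∀ ρ : Matrix n n ℂ, ρ.PosSemidef →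
      Ti j (E i * ρ * E i) = 0 := by
    intro j hj ρ hρ
    have hpsd : (E i * ρ * E i).PosSemidef := by
      have := hρ.mul_mul_conjTranspose_same (E i)
      rwa [hPherm] at this
    apply OperationalAux.psd_eq_zero_of_trace_eq_zero (hTi_pos j _ hpsd)
    rw [htri j]
    have h0 : E j * (E i * ρ * E i) = 0 := by
      simp only [← Matrix.mul_assoc]
      rw [hE_orth j i hj, Matrix.zero_mul, Matrix.zero_mul]
    rw [h0, Matrix.trace_zero]
  -- Step B : cross terms of Ti i vanish
  have hB : ∀ ρ : Matrix n n ℂ, ρ.PosSemidef →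
      Ti i (E i * ρ * Q) = 0 ∧ Ti i (Q * ρ * E i) = 0 := by
    intro ρ hρ
    have := OperationalAux.cross_terms_eq_zero (Ti i) (hTi_pos i) (E i) Q ρ hρ
      (by rw [hQherm]; exact hA ρ hρ)
    rwa [hQherm, hPherm] at this
  -- Step B' : cross terms of Ti j vanish for j ≠ i
  have hB' : ∀ j, j ≠ i → ∀ ρ : Matrix n n ℂ, ρ.PosSemidef →
      Ti j (Q * ρ * E i) = 0 ∧ Ti j (E i * ρ * Q) = 0 := by
    intro j hj ρ hρ
    have := OperationalAux.cross_terms_eq_zero (Ti j) (hTi_pos j) Q (E i) ρ hρ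
      (by rw [hPherm]; exact hA' j hj ρ hρ)
    rwa [hQherm, hPherm] at this
  -- (1) : Ti i ρ = Ti i (E i * ρ * E i) for all ρ
  have h1 : ∀ ρ : Matrix n n ℂ, Ti i (1 * ρ * 1) = Ti i (E i * ρ * E i) := by
    apply OperationalAux.sandwich_ext
    intro ρ hρ
    rw [one_mul, mul_one]
    have hρdec : ρ = E i * ρ * E i + E i * ρ * Q + Q * ρ * E i + Q * ρ * Q := by
      have h01 : (E i + Q) * ρ * (E i + Q) = ρ := by rw [hPQsum, one_mul, mul_one]
      conv_lhs => rw [← h01]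
      simp only [Matrix.add_mul, Matrix.mul_add]
      abel
    calc Ti i ρ = Ti i (E i * ρ * E i + E i * ρ * Q + Q * ρ * E i + Q * ρ * Q) := by
          rw [← hρdec]
      _ = Ti i (E i * ρ * E i) := by
          rw [map_add, map_add, map_add, (hB ρ hρ).1, (hB ρ hρ).2, hA ρ hρ,
            add_zero, add_zero, add_zero]
  -- (2) : T (E i * ρ * E i) = Ti i (E i * ρ * E i) for all ρ
  have h2 : ∀ ρ : Matrix n n ℂ, T (E i * ρ * E i) = Ti i (E i * ρ * E i) := by
    apply OperationalAux.sandwich_ext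
    intro ρ hρ
    rw [hsum, LinearMap.sum_apply]
    exact Finset.sum_eq_single i (fun j _ hj => hA' j hj ρ hρ)
      (fun h => absurd (Finset.mem_univ i) h)
  -- (3) : T kills the cross terms
  have h3 : ∀ ρ : Matrix n n ℂ, T (E i * ρ * Q) = (0 : Matrix n n ℂ →ₗ[ℂ] Matrix n n ℂ) (1 * ρ * 1) := by
    apply OperationalAux.sandwich_ext
    intro ρ hρ
    rw [hsum, LinearMap.sum_apply, LinearMap.zero_apply]
    apply Finset.sum_eq_zero
    intro j _
    by_cases hj : j = i
    · subst hj; exact (hB ρ hρ).1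
    · exact (hB' j hj ρ hρ).2
  have h4 : ∀ ρ : Matrix n n ℂ, T (Q * ρ * E i) = (0 : Matrix n n ℂ →ₗ[ℂ] Matrix n n ℂ) (1 * ρ * 1) := by
    apply OperationalAux.sandwich_ext
    intro ρ hρ
    rw [hsum, LinearMap.sum_apply, LinearMap.zero_apply]
    apply Finset.sum_eq_zero
    intro j _
    by_cases hj : j = i
    · subst hj; exact (hB ρ hρ).2
    · exact (hB' j hj ρ hρ).1
  -- assemble
  intro ρ
  have e1 : Ti i ρ = Ti i (E i * ρ * E i) := by
    have := h1 ρ; rwa [one_mul, mul_one] at this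
  have e2 : T (E i * ρ * E i) = Ti i (E i * ρ * E i) := h2 ρ
  have e3 : T (E i * ρ * Q) = 0 := by
    have := h3 ρ; rwa [LinearMap.zero_apply] at this
  have e4 : T (Q * ρ * E i) = 0 := by
    have := h4 ρ; rwa [LinearMap.zero_apply] at this
  have hmulE : E i * ρ = E i * ρ * E i + E i * ρ * Q := by
    rw [← Matrix.mul_add, hPQsum, mul_one]
  have hEmul : ρ * E i = E i * ρ * E i + Q * ρ * E i := by
    rw [← Matrix.add_mul, ← Matrix.add_mul, hPQsum, one_mul]
  have key : Ti i ρ = T (E i * ρ * E i) := e1.trans e2.symm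
  refine ⟨?_, ?_, key⟩
  · rw [hmulE, map_add, e3, add_zero, key]
  · rw [hEmul, map_add, e4, add_zero, key]
end

section
/- Let n be a nonempty finite type and ι a finite type. Let (E i)_{i : ι} be a resolution of the identity on Matrix n n ℂ. Let Φ and (Φ i)_{i : ι} be positive linear maps on Matrix n n ℂ such that (1) Φ = ∑ i, Φ i, (2) Φ 1 = 1, and (3) Φ i 1 = E i for every i. Then for every i and every matrix X one has Φ i X = (E i) * Φ X = (Φ X) * (E i) = (E i) * (Φ X) * (E i). -/
open scoped ComplexOrder
open Matrix

/-- A PSD matrix whose negation is also PSD is zero. -/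
lemma psd_neg_psd_eq_zero {n : Type*} [Fintype n] [DecidableEq n]
    {M : Matrix n n ℂ} (h1 : M.PosSemidef) (h2 : (-M).PosSemidef) : M = 0 := by
  have hform : ∀ x : n → ℂ, star x ⬝ᵥ M *ᵥ x = 0 := by
    intro x
    refine le_antisymm ?_ (h1.dotProduct_mulVec_nonneg x)
    have := h2.dotProduct_mulVec_nonneg x
    simpa [neg_mulVec, dotProduct_neg, neg_nonneg] using this
  set S := (open scoped MatrixOrder in CFC.sqrt M) with hS
  have hSS : S * S = M := by
    open scoped MatrixOrder in exact CFC.sqrt_mul_sqrt_self M (nonneg_iff_posSemidef.mpr h1)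
  have hSherm : Sᴴ = S := by
    open scoped MatrixOrder in exact (nonneg_iff_posSemidef.mp (CFC.sqrt_nonneg M)).1
  have hSx : ∀ x : n → ℂ, S *ᵥ x = 0 := by
    intro x
    have : star (S *ᵥ x) ⬝ᵥ (S *ᵥ x) = 0 := by
      have : star x ⬝ᵥ (Sᴴ * S) *ᵥ x = 0 := by rw [hSherm, hSS]; exact hform x
      rwa [← mulVec_mulVec, dotProduct_mulVec, ← star_mulVec] at this
    exact dotProduct_star_self_eq_zero.mp this
  have hSzero : S = 0 := by
    ext i j
    have := congr_fun (hSx (Pi.single j 1)) i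
    simpa [mulVec_single] using this
  rw [← hSS, hSzero, Matrix.zero_mul]

/-- Shift of a Hermitian matrix: `c•1 - H` is PSD when `c` dominates the eigenvalues. -/
lemma smul_one_sub_psd {n : Type*} [Fintype n] [DecidableEq n]
    {H : Matrix n n ℂ} (hH : H.IsHermitian) (c : ℝ)
    (hc : ∀ i, hH.eigenvalues i ≤ c) : ((c : ℂ) • 1 - H).PosSemidef := by
  set U := (hH.eigenvectorUnitary : Matrix n n ℂ) with hU
  have hUU : U * star U = 1 := Matrix.mem_unitaryGroup_iff.mp hH.eigenvectorUnitary.2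
  have h1 : U * ((c : ℂ) • 1) * star U = (c : ℂ) • 1 := by
    rw [mul_smul_comm, mul_one, smul_mul_assoc, hUU]
  have key : (c : ℂ) • (1 : Matrix n n ℂ) - H
      = U * ((c : ℂ) • 1 - diagonal (RCLike.ofReal ∘ hH.eigenvalues)) * star U := by
    conv_lhs => rw [hH.spectral_theorem, Unitary.conjStarAlgAut_apply]
    rw [Matrix.mul_sub, Matrix.sub_mul, h1]

  have hdiag : ((c : ℂ) • 1 - diagonal (RCLike.ofReal ∘ hH.eigenvalues) : Matrix n n ℂ)
      = diagonal (fun i => ((c - hH.eigenvalues i : ℝ) : ℂ)) := by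
    rw [smul_one_eq_diagonal, diagonal_sub]
    funext i
    push_cast
    rfl
  rw [key, hdiag, Matrix.star_eq_conjTranspose]
  exact (posSemidef_diagonal_iff.mpr fun i => by
    exact Complex.zero_le_real.mpr (sub_nonneg.mpr (hc i))).mul_mul_conjTranspose_same U

/-- Every PSD matrix is dominated by a scalar multiple of the identity. -/
lemma psd_le_smul_one {n : Type*} [Fintype n] [DecidableEq n]
    {X : Matrix n n ℂ} (hX : X.PosSemidef) :
    ∃ c : ℝ, ((c : ℂ) • 1 - X).PosSemidef := by
  refine ⟨∑ i, hX.1.eigenvalues i, smul_one_sub_psd hX.1 _ fun i => ?_⟩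
  exact Finset.single_le_sum (fun j _ => hX.eigenvalues_nonneg j) (Finset.mem_univ i)

/-- Every Hermitian matrix is a difference of PSD matrices. -/
lemma herm_decomp {n : Type*} [Fintype n] [DecidableEq n]
    {H : Matrix n n ℂ} (hH : H.IsHermitian) :
    ∃ P Q : Matrix n n ℂ, P.PosSemidef ∧ Q.PosSemidef ∧ H = P - Q := by
  set c : ℝ := ∑ i, |hH.eigenvalues i| with hc
  have hc0 : 0 ≤ c := Finset.sum_nonneg fun i _ => abs_nonneg _
  have hcle : ∀ i, hH.eigenvalues i ≤ c := fun i =>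
    le_trans (le_abs_self _) (Finset.single_le_sum (f := fun j => |hH.eigenvalues j|)
      (fun j _ => abs_nonneg _) (Finset.mem_univ i))
  refine ⟨(c : ℂ) • 1, (c : ℂ) • 1 - H, ?_, smul_one_sub_psd hH c hcle, by abel⟩
  rw [smul_one_eq_diagonal]
  exact posSemidef_diagonal_iff.mpr fun i => by exact Complex.zero_le_real.mpr hc0

/-- A linear map vanishing on PSD matrices vanishes. -/
lemma linmap_eq_zero_of_psd {n : Type*} [Fintype n] [DecidableEq n]
    (L : Matrix n n ℂ →ₗ[ℂ] Matrix n n ℂ)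
    (h : ∀ X : Matrix n n ℂ, X.PosSemidef → L X = 0) :
    ∀ X : Matrix n n ℂ, L X = 0 := by
  intro X
  set H : Matrix n n ℂ := (2⁻¹ : ℂ) • (X + Xᴴ) with hHdef
  set K : Matrix n n ℂ := (2⁻¹ * Complex.I : ℂ) • (Xᴴ - X) with hKdef
  have hstar1 : star (2⁻¹ : ℂ) = (2⁻¹ : ℂ) := by
    simp [Complex.ext_iff]
  have hstar2 : star (2⁻¹ * Complex.I : ℂ) = -(2⁻¹ * Complex.I : ℂ) := by
    simp [Complex.ext_iff]
  have hH : H.IsHermitian := by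
    simp only [IsHermitian, hHdef, conjTranspose_smul, conjTranspose_add,
      conjTranspose_conjTranspose, hstar1, add_comm]
  have hK : K.IsHermitian := by
    simp only [IsHermitian, hKdef, conjTranspose_smul, conjTranspose_sub,
      conjTranspose_conjTranspose, hstar2, neg_smul, ← smul_neg, neg_sub]
  have hX : X = H + Complex.I • K := by
    rw [hHdef, hKdef, smul_smul,
      show Complex.I * (2⁻¹ * Complex.I) = -(2⁻¹ : ℂ) by
        rw [show Complex.I * (2⁻¹ * Complex.I) = 2⁻¹ * (Complex.I * Complex.I) from by ring,
          Complex.I_mul_I]; ring]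
    module
  obtain ⟨P1, Q1, hP1, hQ1, hH1⟩ := herm_decomp hH
  obtain ⟨P2, Q2, hP2, hQ2, hK1⟩ := herm_decomp hK
  rw [hX, hH1, hK1]
  simp [map_add, map_sub, _root_.map_smul, h _ hP1, h _ hQ1, h _ hP2, h _ hQ2]

/-- The Lemma of the paper's appendix (Heisenberg/dual picture):
a unital positive map dominating the family `Φ i` with `Φ i 1 = E i`
satisfies `Φ i X = E i * Φ X = Φ X * E i = E i * Φ X * E i`. -/
theorem dual_operational_distribution_lemma
    {n ι : Type*} [Fintype n] [DecidableEq n] [Nonempty n] [Fintype ι]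
    (E : ι → Matrix n n ℂ)
    (hE_herm : ∀ i, (E i).IsHermitian)
    (hE_idem : ∀ i, E i * E i = E i)
    (hE_orth : ∀ i j, i ≠ j → E i * E j = 0)
    (hE_sum : ∑ i, E i = 1)
    (Φ : Matrix n n ℂ →ₗ[ℂ] Matrix n n ℂ)
    (Φi : ι → (Matrix n n ℂ →ₗ[ℂ] Matrix n n ℂ))
    (hΦ_pos : ∀ X : Matrix n n ℂ, X.PosSemidef → (Φ X).PosSemidef)
    (hΦi_pos : ∀ i, ∀ X : Matrix n n ℂ, X.PosSemidef → (Φi i X).PosSemidef)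
    (hsum : Φ = ∑ i, Φi i)
    (hunital : Φ 1 = 1)
    (hΦi_one : ∀ i, Φi i 1 = E i) :
    ∀ i, ∀ X : Matrix n n ℂ,
      Φi i X = E i * Φ X ∧ Φi i X = Φ X * E i ∧ Φi i X = E i * Φ X * E i := by
  classical
  -- Step 1: absorption for PSD inputs
  have absorb : ∀ j, ∀ X : Matrix n n ℂ, X.PosSemidef →
      E j * Φi j X = Φi j X ∧ Φi j X * E j = Φi j X := by
    intro j X hXpsd
    obtain ⟨c, hc⟩ := psd_le_smul_one hXpsd
    set A := Φi j X with hA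
    have hApsd : A.PosSemidef := hΦi_pos j X hXpsd
    have hB : (Φi j ((c : ℂ) • 1 - X)) = (c : ℂ) • E j - A := by
      rw [map_sub, _root_.map_smul, hΦi_one j]
    have hBpsd : ((c : ℂ) • E j - A).PosSemidef := hB ▸ hΦi_pos j _ hc
    set Q : Matrix n n ℂ := 1 - E j with hQ
    have hQherm : Qᴴ = Q := by
      rw [hQ, conjTranspose_sub, conjTranspose_one, (hE_herm j).eq]
    have hQE : Q * E j = 0 := by
      rw [hQ, Matrix.sub_mul, Matrix.one_mul, hE_idem j, sub_self]
    have hM : (Q * A * Q).PosSemidef := by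
      have := hApsd.conjTranspose_mul_mul_same Q
      rwa [hQherm] at this
    have hMneg : (-(Q * A * Q)).PosSemidef := by
      have h := hBpsd.conjTranspose_mul_mul_same Q
      rw [hQherm] at h
      have gen : ∀ Q' : Matrix n n ℂ, Q' * E j = 0 →
          Q' * ((c : ℂ) • E j - A) * Q' = -(Q' * A * Q') := by
        intro Q' h0
        rw [Matrix.mul_sub, mul_smul_comm, h0, smul_zero, zero_sub, Matrix.neg_mul]
      have e := gen Q hQE
      rwa [e] at h
    have hM0 : Q * A * Q = 0 := psd_neg_psd_eq_zero hM hMneg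
    set S := (open scoped MatrixOrder in CFC.sqrt A) with hSdef
    have hSS : S * S = A := by
      open scoped MatrixOrder in exact CFC.sqrt_mul_sqrt_self A (nonneg_iff_posSemidef.mpr hApsd)
    have hSherm : Sᴴ = S := by
      open scoped MatrixOrder in exact (nonneg_iff_posSemidef.mp (CFC.sqrt_nonneg A)).1
    have hSQ : S * Q = 0 := by
      have h1 : (S * Q)ᴴ * (S * Q) = 0 := by
        have h2 : (S * Q)ᴴ * (S * Q) = Q * A * Q := by
          rw [conjTranspose_mul, hSherm, hQherm, ← hSS]
          noncomm_ring
        rw [h2, hM0]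
      exact conjTranspose_mul_self_eq_zero.mp h1
    have hAQ : A * Q = 0 := by
      rw [show A * Q = S * (S * Q) by rw [← Matrix.mul_assoc, hSS], hSQ, Matrix.mul_zero]
    have hQA : Q * A = 0 := by
      have h := congrArg conjTranspose hAQ
      rwa [conjTranspose_mul, hQherm, hApsd.1.eq, conjTranspose_zero] at h
    constructor
    · have h : A - E j * A = 0 := by
        rw [hQ, Matrix.sub_mul, Matrix.one_mul] at hQA
        exact hQA
      exact (sub_eq_zero.mp h).symm
    · have h : A - A * E j = 0 := by
        rw [hQ, Matrix.mul_sub, Matrix.mul_one] at hAQ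
        exact hAQ
      exact (sub_eq_zero.mp h).symm
  -- Step 2: the identities for PSD inputs
  have main_psd : ∀ i, ∀ X : Matrix n n ℂ, X.PosSemidef →
      Φi i X = E i * Φ X ∧ Φi i X = Φ X * E i := by
    intro i X hX
    have hΦX : Φ X = ∑ j, Φi j X := by rw [hsum]; simp
    constructor
    · rw [hΦX, Finset.mul_sum, Finset.sum_eq_single i]
      · exact ((absorb i X hX).1).symm
      · intro j _ hj
        rw [← (absorb j X hX).1, ← Matrix.mul_assoc, hE_orth i j (Ne.symm hj), Matrix.zero_mul]
      · intro h; exact absurd (Finset.mem_univ i) h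
    · rw [hΦX, Finset.sum_mul, Finset.sum_eq_single i]
      · exact ((absorb i X hX).2).symm
      · intro j _ hj
        rw [← (absorb j X hX).2, Matrix.mul_assoc, hE_orth j i hj, Matrix.mul_zero]
      · intro h; exact absurd (Finset.mem_univ i) h
  -- Step 3: extend to all matrices by linearity
  have left_all : ∀ i, ∀ X : Matrix n n ℂ, Φi i X = E i * Φ X := by
    intro i
    have := linmap_eq_zero_of_psd (Φi i - (LinearMap.mulLeft ℂ (E i)).comp Φ)
      (fun X hX => by
        simp only [LinearMap.sub_apply, LinearMap.comp_apply, LinearMap.mulLeft_apply]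
        rw [(main_psd i X hX).1, sub_self])
    intro X
    have h := this X
    simp only [LinearMap.sub_apply, LinearMap.comp_apply, LinearMap.mulLeft_apply] at h
    exact sub_eq_zero.mp h
  have right_all : ∀ i, ∀ X : Matrix n n ℂ, Φi i X = Φ X * E i := by
    intro i
    have := linmap_eq_zero_of_psd (Φi i - (LinearMap.mulRight ℂ (E i)).comp Φ)
      (fun X hX => by
        simp only [LinearMap.sub_apply, LinearMap.comp_apply, LinearMap.mulRight_apply]
        rw [(main_psd i X hX).2, sub_self])
    intro X
    have h := this X
    simp only [LinearMap.sub_apply, LinearMap.comp_apply, LinearMap.mulRight_apply] at h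
    exact sub_eq_zero.mp h
  intro i X
  refine ⟨left_all i X, right_all i X, ?_⟩
  calc Φi i X = E i * Φ X := left_all i X
    _ = E i * E i * Φ X := by rw [hE_idem i]
    _ = E i * (E i * Φ X) := by rw [Matrix.mul_assoc]
    _ = E i * Φi i X := by rw [← left_all i X]
    _ = E i * (Φ X * E i) := by rw [right_all i X]
    _ = E i * Φ X * E i := by rw [Matrix.mul_assoc]
end

section
/- Let n be a nonempty finite type and ι a finite type. Let (E i)_{i : ι} be a resolution of the identity on Matrix n n ℂ, and let T be a positive linear map on Matrix n n ℂ with trace (T ρ) = trace ρ for every ρ. Suppose (T i)_{i : ι} and (T' i)_{i : ι} are two families of positive linear maps on Matrix n n ℂ such that ∑ i, T i = T = ∑ i, T' i and, for every i and every ρ, trace (T i ρ) = trace ((E i) * ρ) = trace (T' i ρ). Then T i = T' i for every i. -/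
open scoped ComplexOrder

namespace OperUniqueAux

open Matrix

variable {n : Type*} [Fintype n] [DecidableEq n]

/-- Rank-one outer products are positive semidefinite. -/
lemma psd_outer (x : n → ℂ) : (vecMulVec x (star x)).PosSemidef := by
  refine posSemidef_iff_dotProduct_mulVec.mpr ⟨?_, ?_⟩
  · ext p q
    simp [conjTranspose_apply, vecMulVec_apply, mul_comm]
  · intro v
    have hmv : vecMulVec x (star x) *ᵥ v = (star x ⬝ᵥ v) • x := by
      ext p
      simp only [mulVec, dotProduct, vecMulVec_apply, Pi.smul_apply, smul_eq_mul,
        Pi.star_apply]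
      rw [Finset.sum_mul]
      exact Finset.sum_congr rfl fun j _ => by ring
    rw [hmv, dotProduct_smul, smul_eq_mul, star_dotProduct]
    exact star_mul_self_nonneg (star v ⬝ᵥ x)

/-- A PSD matrix with zero trace is zero. -/
lemma psd_trace_zero {M : Matrix n n ℂ} (hM : M.PosSemidef) (h : M.trace = 0) :
    M = 0 := by
  obtain ⟨B, rfl⟩ : ∃ B : Matrix n n ℂ, M = Bᴴ * B := by
    open scoped MatrixOrder in exact CStarAlgebra.nonneg_iff_eq_star_mul_self.mp hM.nonneg
  have htr : (Bᴴ * B).trace = ∑ i, ∑ j, (Complex.normSq (B j i) : ℂ) := by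
    simp [trace, mul_apply, conjTranspose_apply, diag, Complex.normSq_eq_conj_mul_self]
  rw [htr] at h
  have h' : ∑ i, ∑ j, Complex.normSq (B j i) = 0 := by
    have := congrArg Complex.re h
    simpa using this
  have hB : B = 0 := by
    ext j i
    have h1 : ∀ i ∈ Finset.univ, (0:ℝ) ≤ ∑ j, Complex.normSq (B j i) :=
      fun i _ => Finset.sum_nonneg fun j _ => Complex.normSq_nonneg _
    have h2 := (Finset.sum_eq_zero_iff_of_nonneg h1).mp h' i (Finset.mem_univ i)
    have h3 := (Finset.sum_eq_zero_iff_of_nonneg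
      (fun j _ => Complex.normSq_nonneg (B j i))).mp h2 j (Finset.mem_univ j)
    simpa using Complex.normSq_eq_zero.mp h3
  simp [hB]

/-- A matrix whose quadratic form vanishes identically (over ℂ) is zero. -/
lemma quad_form_zero {B : Matrix n n ℂ} (h : ∀ v, star v ⬝ᵥ (B *ᵥ v) = 0) :
    B = 0 := by
  have expand : ∀ (a b : n → ℂ), star (a + b) ⬝ᵥ (B *ᵥ (a + b)) =
      star a ⬝ᵥ (B *ᵥ a) + star a ⬝ᵥ (B *ᵥ b) + star b ⬝ᵥ (B *ᵥ a)
        + star b ⬝ᵥ (B *ᵥ b) := by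
    intro a b
    simp only [star_add, mulVec_add, dotProduct_add, add_dotProduct]
    ring
  have hbil : ∀ u w : n → ℂ, star u ⬝ᵥ (B *ᵥ w) = 0 := by
    intro u w
    have hu := h u
    have hw := h w
    have e1 := h (u + w)
    rw [expand, hu, hw, zero_add, add_zero] at e1
    have e2 := h (u + Complex.I • w)
    rw [expand, hu, zero_add] at e2
    have hsw : star (Complex.I • w) = (-Complex.I) • star w := by
      rw [star_smul]
      congr 1
      simp [Complex.star_def, Complex.conj_I]
    rw [hsw] at e2
    simp only [mulVec_smul, dotProduct_smul, smul_dotProduct, smul_eq_mul, hw,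
      mul_zero, add_zero] at e2
    set p := star u ⬝ᵥ (B *ᵥ w) with hp
    set q := star w ⬝ᵥ (B *ᵥ u) with hq
    -- e1 : p + q = 0, e2 : I * p + (-I) * q = 0
    have hq' : q = -p := by linear_combination e1
    have h2I : (2 * Complex.I) * p = 0 := by linear_combination e2 + Complex.I * hq'
    rcases mul_eq_zero.mp h2I with h' | h'
    · exact absurd h' (by simp [Complex.I_ne_zero])
    · exact h'
  ext p q
  have := hbil (Pi.single p 1) (Pi.single q 1)
  simpa [dotProduct, mulVec, Pi.single_apply, Finset.mul_sum, apply_ite] using this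

lemma coeff_zero {a b : ℂ} (h : ∀ t : ℝ, 0 ≤ a + (t:ℂ) * b) : b = 0 := by
  have h0 := Complex.nonneg_iff.mp (h 0)
  have h1 := Complex.nonneg_iff.mp (h 1)
  have haim : a.im = 0 := by
    have := h0.2
    simpa using this.symm
  have him : b.im = 0 := by
    have := h1.2
    simp [Complex.add_im, Complex.mul_im, haim] at this
    simpa using this.symm
  have hre : b.re = 0 := by
    by_contra hb
    have key := (Complex.nonneg_iff.mp (h (-(a.re + 1)/b.re))).1
    simp only [Complex.add_re, Complex.mul_re, Complex.ofReal_re, Complex.ofReal_im,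
      him, mul_zero, zero_mul, sub_zero] at key
    rw [div_mul_cancel₀ _ hb] at key
    linarith
  exact Complex.ext hre him

lemma aux_scalar {α β γ : ℂ} (h : ∀ c : ℂ, 0 ≤ α + (starRingEnd ℂ) c * β + c * γ) :
    β = 0 ∧ γ = 0 := by
  have h1 : ∀ t : ℝ, 0 ≤ α + (t:ℂ) * (β + γ) := by
    intro t
    have := h t
    have heq : α + (starRingEnd ℂ) (t:ℂ) * β + (t:ℂ) * γ = α + (t:ℂ) * (β + γ) := by
      rw [Complex.conj_ofReal]; ring
    rwa [heq] at this
  have h2 : ∀ t : ℝ, 0 ≤ α + (t:ℂ) * (Complex.I * (γ - β)) := by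
    intro t
    have := h ((t:ℂ) * Complex.I)
    have heq : α + (starRingEnd ℂ) ((t:ℂ) * Complex.I) * β + ((t:ℂ) * Complex.I) * γ
        = α + (t:ℂ) * (Complex.I * (γ - β)) := by
      simp only [_root_.map_mul, Complex.conj_ofReal, Complex.conj_I]
      ring
    rwa [heq] at this
  have hb1 : β + γ = 0 := coeff_zero h1
  have hb2 : Complex.I * (γ - β) = 0 := coeff_zero h2
  have hb2' : γ - β = 0 := by
    rcases mul_eq_zero.mp hb2 with h' | h'
    · exact absurd h' Complex.I_ne_zero
    · exact h'
  constructor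
  · linear_combination (hb1 - hb2') / 2
  · linear_combination (hb1 + hb2') / 2

lemma trace_mul_outer (P : Matrix n n ℂ) (u w : n → ℂ) :
    (P * vecMulVec u w).trace = w ⬝ᵥ (P *ᵥ u) := by
  simp only [trace, diag_apply, mul_apply, vecMulVec_apply, dotProduct, mulVec,
    Finset.mul_sum]
  refine Finset.sum_congr rfl fun p _ => ?_
  refine Finset.sum_congr rfl fun q _ => by ring

/-- The key lemma: a positive map `S` whose output traces are given by a matrix
`P` annihilates outer products `x y*` and `y x*` whenever `P y = 0`. -/
lemma outer_zero (S : Matrix n n ℂ →ₗ[ℂ] Matrix n n ℂ)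
    (hS : ∀ ρ : Matrix n n ℂ, ρ.PosSemidef → (S ρ).PosSemidef)
    (P : Matrix n n ℂ) (htrS : ∀ ρ, (S ρ).trace = (P * ρ).trace)
    {y : n → ℂ} (hy : P *ᵥ y = 0) (x : n → ℂ) :
    S (vecMulVec x (star y)) = 0 ∧ S (vecMulVec y (star x)) = 0 := by
  have hyy : S (vecMulVec y (star y)) = 0 := by
    apply psd_trace_zero (hS _ (psd_outer y))
    rw [htrS, trace_mul_outer, hy]
    simp
  set A := S (vecMulVec x (star x)) with hA
  set B := S (vecMulVec x (star y)) with hB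
  set C := S (vecMulVec y (star x)) with hC
  have hApsd : A.PosSemidef := hS _ (psd_outer x)
  have hc : ∀ c : ℂ, (A + (starRingEnd ℂ) c • B + c • C).PosSemidef := by
    intro c
    have hexp : vecMulVec (x + c • y) (star (x + c • y)) =
        vecMulVec x (star x) + (starRingEnd ℂ) c • vecMulVec x (star y)
          + c • vecMulVec y (star x)
          + (c * (starRingEnd ℂ) c) • vecMulVec y (star y) := by
      ext p q
      simp only [vecMulVec_apply, Pi.star_apply, Pi.add_apply, Pi.smul_apply,
        smul_eq_mul, Matrix.add_apply, Matrix.smul_apply, star_add, star_smul,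
        Complex.star_def, _root_.map_mul]
      ring
    have hpsd := hS _ (psd_outer (x + c • y))
    rw [hexp] at hpsd
    simp only [map_add, _root_.map_smul, hyy, smul_zero, add_zero] at hpsd
    exact hpsd
  have hq : ∀ v : n → ℂ, (star v ⬝ᵥ (B *ᵥ v) = 0) ∧ (star v ⬝ᵥ (C *ᵥ v) = 0) := by
    intro v
    apply aux_scalar (α := star v ⬝ᵥ (A *ᵥ v))
    intro c
    have := (hc c).dotProduct_mulVec_nonneg v
    simpa only [add_mulVec, smul_mulVec, dotProduct_add, dotProduct_smul,
      smul_eq_mul] using this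
  exact ⟨quad_form_zero fun v => (hq v).1, quad_form_zero fun v => (hq v).2⟩

lemma mul_conjT_sum (A N : Matrix n n ℂ) :
    A * Nᴴ = ∑ q, vecMulVec (A *ᵥ Pi.single q 1) (star (N *ᵥ Pi.single q 1)) := by
  ext p r
  rw [Matrix.sum_apply]
  simp [mul_apply, vecMulVec_apply, mulVec_single, conjTranspose_apply, mul_comm]

lemma left_mul_sum (N A : Matrix n n ℂ) :
    N * A = ∑ p, vecMulVec (N *ᵥ Pi.single p 1) (star (Aᴴ *ᵥ Pi.single p 1)) := by
  ext q r
  rw [Matrix.sum_apply]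
  simp [mul_apply, vecMulVec_apply, mulVec_single, conjTranspose_apply]

/-- A positive map with outcome projection `P` only sees the `P`-block. -/
lemma reduce (P : Matrix n n ℂ) (hherm : P.IsHermitian) (hidem : P * P = P)
    (S : Matrix n n ℂ →ₗ[ℂ] Matrix n n ℂ)
    (hS : ∀ ρ : Matrix n n ℂ, ρ.PosSemidef → (S ρ).PosSemidef)
    (htrS : ∀ ρ, (S ρ).trace = (P * ρ).trace) (A : Matrix n n ℂ) :
    S A = S (P * A * P) := by
  have hP1 : P * (1 - P) = 0 := by
    rw [mul_sub, mul_one, hidem, sub_self]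
  have hker : ∀ v : n → ℂ, P *ᵥ ((1 - P) *ᵥ v) = 0 := by
    intro v
    rw [mulVec_mulVec, hP1, zero_mulVec]
  have h1 : S ((1 - P) * A) = 0 := by
    rw [left_mul_sum (1 - P) A, map_sum]
    exact Finset.sum_eq_zero fun p _ =>
      (outer_zero S hS P htrS (hker _) _).2
  have h2 : S (P * A * (1 - P)) = 0 := by
    have h1E : (1 - P)ᴴ = 1 - P := by
      rw [conjTranspose_sub, conjTranspose_one, hherm.eq]
    have hrw : P * A * (1 - P) = (P * A) * (1 - P)ᴴ := by rw [h1E]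
    rw [hrw, mul_conjT_sum, map_sum]
    exact Finset.sum_eq_zero fun q _ =>
      (outer_zero S hS P htrS (hker _) _).1
  have hdecomp : A = P * A * P + P * A * (1 - P) + (1 - P) * A := by
    noncomm_ring
  calc S A = S (P * A * P + P * A * (1 - P) + (1 - P) * A) := by rw [← hdecomp]
    _ = S (P * A * P) + S (P * A * (1 - P)) + S ((1 - P) * A) := by
        rw [map_add, map_add]
    _ = S (P * A * P) := by rw [h1, h2, add_zero, add_zero]

/-- A positive map with outcome projection `Q` annihilates blocks of an
orthogonal projection `P`. -/
lemma vanish (P Q : Matrix n n ℂ) (hherm : P.IsHermitian) (horth : Q * P = 0)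
    (S : Matrix n n ℂ →ₗ[ℂ] Matrix n n ℂ)
    (hS : ∀ ρ : Matrix n n ℂ, ρ.PosSemidef → (S ρ).PosSemidef)
    (htrS : ∀ ρ, (S ρ).trace = (Q * ρ).trace) (A : Matrix n n ℂ) :
    S (P * A * P) = 0 := by
  have hker : ∀ v : n → ℂ, Q *ᵥ (P *ᵥ v) = 0 := by
    intro v
    rw [mulVec_mulVec, horth, zero_mulVec]
  have hrw : P * A * P = (P * A) * Pᴴ := by rw [hherm.eq]
  rw [hrw, mul_conjT_sum, map_sum]
  exact Finset.sum_eq_zero fun q _ =>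
    (outer_zero S hS Q htrS (hker _) _).1

end OperUniqueAux

/-- Uniqueness of the operational distribution: two families of positive
linear maps summing to the same trace-preserving positive operation and
yielding the same outcome probabilities coincide. -/
theorem operational_distribution_unique
    {n ι : Type*} [Fintype n] [DecidableEq n] [Nonempty n] [Fintype ι]
    (E : ι → Matrix n n ℂ)
    (hE_herm : ∀ i, (E i).IsHermitian)
    (hE_idem : ∀ i, E i * E i = E i)
    (hE_orth : ∀ i j, i ≠ j → E i * E j = 0)
    (hE_sum : ∑ i, E i = 1)
    (T : Matrix n n ℂ →ₗ[ℂ] Matrix n n ℂ)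
    (hT_pos : ∀ ρ : Matrix n n ℂ, ρ.PosSemidef → (T ρ).PosSemidef)
    (htr : ∀ ρ : Matrix n n ℂ, (T ρ).trace = ρ.trace)
    (Ti Ti' : ι → (Matrix n n ℂ →ₗ[ℂ] Matrix n n ℂ))
    (hTi_pos : ∀ i, ∀ ρ : Matrix n n ℂ, ρ.PosSemidef → (Ti i ρ).PosSemidef)
    (hTi'_pos : ∀ i, ∀ ρ : Matrix n n ℂ, ρ.PosSemidef → (Ti' i ρ).PosSemidef)
    (hsum : ∑ i, Ti i = T) (hsum' : ∑ i, Ti' i = T)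
    (htri : ∀ i, ∀ ρ : Matrix n n ℂ, (Ti i ρ).trace = (E i * ρ).trace)
    (htri' : ∀ i, ∀ ρ : Matrix n n ℂ, (Ti' i ρ).trace = (E i * ρ).trace) :
    ∀ i, Ti i = Ti' i := by
  intro i
  have hfor : ∀ (F : ι → (Matrix n n ℂ →ₗ[ℂ] Matrix n n ℂ)),
      (∀ j, ∀ ρ : Matrix n n ℂ, ρ.PosSemidef → (F j ρ).PosSemidef) →
      (∀ j, ∀ ρ : Matrix n n ℂ, (F j ρ).trace = (E j * ρ).trace) →
      (∑ j, F j = T) →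
      ∀ A, F i A = T (E i * A * E i) := by
    intro F hpos htrF hsumF A
    have h1 : F i A = F i (E i * A * E i) :=
      OperUniqueAux.reduce (E i) (hE_herm i) (hE_idem i) (F i) (hpos i) (htrF i) A
    have h2 : T (E i * A * E i) = ∑ j, F j (E i * A * E i) := by
      rw [← hsumF, LinearMap.sum_apply]
    rw [h2, Finset.sum_eq_single i, ← h1]
    · intro j _ hj
      exact OperUniqueAux.vanish (E i) (E j) (hE_herm i) (hE_orth j i hj)
        (F j) (hpos j) (htrF j) A
    · intro h
      exact absurd (Finset.mem_univ i) h
  ext A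
  rw [hfor Ti hTi_pos htri hsum A, hfor Ti' hTi'_pos htri' hsum' A]
end

section
/- Let s and a be nonempty finite types, U : Matrix (s × a) (s × a) ℂ a unitary matrix, and σ : Matrix a a ℂ a density matrix. Define T ρ = Tr_A (U * (ρ ⊗ σ) * U†) for ρ : Matrix s s ℂ. Then (1) T ρ is positive semidefinite whenever ρ is positive semidefinite, and (2) trace (T ρ) = trace ρ for every ρ. -/
open scoped Kronecker ComplexOrder
open Matrix

/-- The partial trace over the second (ancilla) factor. -/
noncomputable def partialTraceA {s a : Type*} [Fintype a]
    (X : Matrix (s × a) (s × a) ℂ) : Matrix s s ℂ :=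
  Matrix.of fun i j => ∑ k, X (i, k) (j, k)

lemma conjTranspose_kronecker' {s a : Type*} (A : Matrix s s ℂ) (B : Matrix a a ℂ) :
    (A ⊗ₖ B)ᴴ = Aᴴ ⊗ₖ Bᴴ := by
  ext ⟨i, k⟩ ⟨j, l⟩
  simp [conjTranspose_apply, mul_comm]

lemma kronecker_posSemidef {s a : Type*} [Fintype s] [Fintype a] [DecidableEq s] [DecidableEq a]
    {ρ : Matrix s s ℂ} {σ : Matrix a a ℂ}
    (hρ : ρ.PosSemidef) (hσ : σ.PosSemidef) : (ρ ⊗ₖ σ).PosSemidef := by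
  exact hρ.kronecker hσ

/-- Embedding matrix selecting the ancilla basis state `k`. -/
def embedA {s a : Type*} [DecidableEq s] [DecidableEq a] (k : a) :
    Matrix (s × a) s ℂ :=
  Matrix.of fun p j => if p = (j, k) then 1 else 0

lemma partialTraceA_eq_sum {s a : Type*} [Fintype s] [Fintype a]
    [DecidableEq s] [DecidableEq a]
    (X : Matrix (s × a) (s × a) ℂ) :
    partialTraceA X = ∑ k, @HMul.hMul _ _ (Matrix s (s × a) ℂ) Matrix.instHMulOfFintypeOfMulOfAddCommMonoid (embedA (s := s) k)ᴴ X * embedA (s := s) k := by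
  ext i j
  simp only [partialTraceA, Matrix.of_apply, Matrix.sum_apply, Matrix.mul_apply,
    conjTranspose_apply, embedA, Matrix.of_apply]
  refine Finset.sum_congr rfl fun k _ => ?_
  rw [Finset.sum_eq_single (j, k)]
  · rw [Finset.sum_eq_single (i, k)] <;> simp +contextual
  · simp +contextual
  · simp

lemma partialTraceA_posSemidef {s a : Type*} [Fintype s] [Fintype a]
    [DecidableEq s] [DecidableEq a]
    {X : Matrix (s × a) (s × a) ℂ} (hX : X.PosSemidef) :
    (partialTraceA X).PosSemidef := by
  rw [partialTraceA_eq_sum]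
  refine Finset.sum_induction _ _ (fun A B hA hB => hA.add hB) .zero fun k _ =>
    hX.conjTranspose_mul_mul_same _

lemma partialTraceA_trace {s a : Type*} [Fintype s] [Fintype a]
    (X : Matrix (s × a) (s × a) ℂ) :
    (partialTraceA X).trace = X.trace := by
  simp [partialTraceA, Matrix.trace, Matrix.diag, Fintype.sum_prod_type]

/-- The nonselective state change `ρ ↦ Tr_A[U(ρ⊗σ)U†]` of a measurement model
is positive and trace preserving. -/
theorem nonselective_operation_positive_trace_preserving
    {s a : Type*} [Fintype s] [Fintype a] [DecidableEq s] [DecidableEq a]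
    [Nonempty s] [Nonempty a]
    (U : Matrix (s × a) (s × a) ℂ)
    (hU : U * Uᴴ = 1 ∧ Uᴴ * U = 1)
    (σ : Matrix a a ℂ) (hσ_pos : σ.PosSemidef) (hσ_tr : σ.trace = 1) :
    (∀ ρ : Matrix s s ℂ, ρ.PosSemidef →
        (partialTraceA (U * (ρ ⊗ₖ σ) * Uᴴ)).PosSemidef) ∧
      (∀ ρ : Matrix s s ℂ, (partialTraceA (U * (ρ ⊗ₖ σ) * Uᴴ)).trace = ρ.trace) := by
  constructor
  · intro ρ hρ
    exact partialTraceA_posSemidef ((kronecker_posSemidef hρ hσ_pos).mul_mul_conjTranspose_same U)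
  · intro ρ
    rw [partialTraceA_trace, trace_mul_cycle, hU.2, one_mul,
      trace_kronecker, hσ_tr, mul_one]
end

section
/- Let n and a be nonempty finite types. Let (φ p)_{p : n} be an orthonormal basis of ℂ^n (as functions n → ℂ), ξ : a → ℂ a unit vector, and (ξ p)_{p : n} an orthonormal family in ℂ^a. Let U : Matrix (n × a) (n × a) ℂ be a unitary matrix such that U.mulVec (φ p ⊗ ξ) = φ p ⊗ ξ p for every p. Then for every vector ψ : n → ℂ, Tr_A (U * (|ψ⟩⟨ψ| ⊗ |ξ⟩⟨ξ|) * U†) = ∑ p, ‖⟨φ p, ψ⟩‖^2 • |φ p⟩⟨φ p|. -/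
open scoped Kronecker
open Matrix

/-- The outer product `|v⟩⟨w|`. -/
def outer {m : Type*} (v w : m → ℂ) : Matrix m m ℂ :=
  Matrix.of fun i j => v i * star (w j)

/-- The tensor product of two vectors. -/
def tensorVec {s a : Type*} (v : s → ℂ) (w : a → ℂ) : s × a → ℂ :=
  fun p => v p.1 * w p.2

/-- Equation (52) of the paper: the von Neumann measurement model realizes the
nonselective state change `|ψ⟩⟨ψ| ↦ ∑ₚ |⟨φₚ|ψ⟩|² |φₚ⟩⟨φₚ|`. -/
theorem vonNeumann_model_nonselective_state_change
    {n a : Type*} [Fintype n] [DecidableEq n] [Nonempty n]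
    [Fintype a] [DecidableEq a] [Nonempty a]
    (φ : n → n → ℂ)
    (hφ : ∀ p q, star (φ p) ⬝ᵥ φ q = if p = q then 1 else 0)
    (ξ : a → ℂ) (hξ : star ξ ⬝ᵥ ξ = 1)
    (ξv : n → a → ℂ)
    (hξv : ∀ p q, star (ξv p) ⬝ᵥ ξv q = if p = q then 1 else 0)
    (U : Matrix (n × a) (n × a) ℂ)
    (hU : U * Uᴴ = 1 ∧ Uᴴ * U = 1)
    (hUact : ∀ p, U.mulVec (tensorVec (φ p) ξ) = tensorVec (φ p) (ξv p)) :
    ∀ ψ : n → ℂ,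
      partialTraceA (U * (outer ψ ψ ⊗ₖ outer ξ ξ) * Uᴴ)
        = ∑ p, (‖star (φ p) ⬝ᵥ ψ‖ ^ 2) • outer (φ p) (φ p) := by
  intro ψ
  set c : n → ℂ := fun p => star (φ p) ⬝ᵥ ψ with hc
  -- completeness of φ
  have hcomp : ∀ i j : n, (∑ p, star (φ p i) * φ p j) = if i = j then 1 else 0 := by
    set B : Matrix n n ℂ := Matrix.of (fun p i => φ p i) with hB
    have h1 : B * Bᴴ = 1 := by
      ext p q
      have h := hφ q p
      simp only [dotProduct, Pi.star_apply] at h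
      simp only [Matrix.mul_apply, Matrix.conjTranspose_apply, Matrix.one_apply, hB,
        Matrix.of_apply]
      rw [Finset.sum_congr rfl (fun i _ => mul_comm (φ p i) (star (φ q i))), h]
      simp [eq_comm]
    have h2 : Bᴴ * B = 1 := mul_eq_one_comm.mp h1
    intro i j
    have h := congrFun (congrFun h2 i) j
    simpa [Matrix.mul_apply, Matrix.conjTranspose_apply, hB, Matrix.one_apply] using h
  -- expansion of ψ ⊗ ξ
  have hv : tensorVec ψ ξ = ∑ p, c p • tensorVec (φ p) ξ := by
    funext x
    simp only [Finset.sum_apply, Pi.smul_apply, smul_eq_mul, tensorVec, hc, dotProduct,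
      Pi.star_apply]
    have : ∀ p, (∑ j, star (φ p j) * ψ j) * (φ p x.1 * ξ x.2)
        = ∑ j, ψ j * (star (φ p j) * φ p x.1) * ξ x.2 := by
      intro p; rw [Finset.sum_mul]; exact Finset.sum_congr rfl fun j _ => by ring
    rw [Finset.sum_congr rfl fun p _ => this p, Finset.sum_comm]
    have : ∀ j, (∑ p, ψ j * (star (φ p j) * φ p x.1) * ξ x.2)
        = ψ j * (∑ p, star (φ p j) * φ p x.1) * ξ x.2 := by
      intro j; rw [Finset.mul_sum, Finset.sum_mul]
    rw [Finset.sum_congr rfl fun j _ => this j]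
    simp only [hcomp]
    simp [Finset.sum_ite_eq, mul_ite]
  -- action of U
  have hu : U.mulVec (tensorVec ψ ξ) = fun x => ∑ p, c p * (φ p x.1 * ξv p x.2) := by
    rw [hv]
    funext x
    rw [show U.mulVec (∑ p, c p • tensorVec (φ p) ξ) = ∑ p, c p • U.mulVec (tensorVec (φ p) ξ) by
      simp only [← Matrix.mulVecLin_apply, map_sum, _root_.map_smul]]
    simp [hUact, tensorVec, Finset.sum_apply]
  set u : n × a → ℂ := U.mulVec (tensorVec ψ ξ) with huu
  -- the conjugated matrix is outer u u
  have hM : U * (outer ψ ψ ⊗ₖ outer ξ ξ) * Uᴴ = Matrix.of (fun x y => u x * star (u y)) := by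
    ext x y
    simp only [Matrix.mul_apply, Matrix.conjTranspose_apply, Matrix.kroneckerMap_apply,
      outer, Matrix.of_apply, huu, Matrix.mulVec, dotProduct, tensorVec, star_sum, star_mul']
    rw [Finset.sum_mul_sum]
    rw [Finset.sum_comm]
    refine Finset.sum_congr rfl fun w _ => ?_
    rw [Finset.sum_mul]
    exact Finset.sum_congr rfl fun z _ => by ring
  rw [hM]
  ext i j
  simp only [partialTraceA, Matrix.of_apply, hu]
  -- expand the double sum
  have expand : ∀ k : a, (∑ p, c p * (φ p i * ξv p k)) * star (∑ q, c q * (φ q j * ξv q k))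
      = ∑ p, ∑ q, (c p * star (c q) * (φ p i * star (φ q j))) * (ξv p k * star (ξv q k)) := by
    intro k
    rw [star_sum, Finset.sum_mul_sum]
    refine Finset.sum_congr rfl fun p _ => Finset.sum_congr rfl fun q _ => ?_
    simp only [star_mul']
    ring
  rw [Finset.sum_congr rfl fun k _ => expand k, Finset.sum_comm]
  have inner : ∀ p, (∑ k, ∑ q, (c p * star (c q) * (φ p i * star (φ q j))) * (ξv p k * star (ξv q k)))
      = c p * star (c p) * (φ p i * star (φ p j)) := by
    intro p
    rw [Finset.sum_comm]
    have : ∀ q, (∑ k, (c p * star (c q) * (φ p i * star (φ q j))) * (ξv p k * star (ξv q k)))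
        = (c p * star (c q) * (φ p i * star (φ q j))) * (∑ k, ξv p k * star (ξv q k)) := by
      intro q; rw [Finset.mul_sum]
    rw [Finset.sum_congr rfl fun q _ => this q]
    have horth : ∀ q, (∑ k, ξv p k * star (ξv q k)) = if p = q then 1 else 0 := by
      intro q
      have h := hξv q p
      simp only [dotProduct, Pi.star_apply] at h
      rw [Finset.sum_congr rfl (fun k _ => mul_comm (ξv p k) (star (ξv q k))), h]
      simp [eq_comm]
    simp only [horth, mul_ite, mul_one, mul_zero]
    simp
  rw [Finset.sum_congr rfl fun p _ => inner p]
  simp only [Finset.sum_apply, Matrix.sum_apply, Matrix.smul_apply, outer, Matrix.of_apply,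
    smul_eq_mul]
  refine Finset.sum_congr rfl fun p _ => ?_
  have h1 : (‖star (φ p) ⬝ᵥ ψ‖ : ℝ) = ‖c p‖ := rfl
  rw [h1, show star (c p) = starRingEnd ℂ (c p) from rfl, Complex.mul_conj',
    Complex.real_smul]
  push_cast
  ring
end

section
/- Let n and a be nonempty finite types. Let (φ p)_{p : n} be an orthonormal basis of ℂ^n, ξ : a → ℂ a unit vector, and (ξ p)_{p : n} an orthonormal family in ℂ^a. Let U : Matrix (n × a) (n × a) ℂ be a unitary matrix with U.mulVec (φ p ⊗ ξ) = φ p ⊗ ξ p for every p. Then for every matrix ρ : Matrix n n ℂ and every q : n, trace ((1 ⊗ |ξ q⟩⟨ξ q|) * U * (ρ ⊗ |ξ⟩⟨ξ|) * U†) = trace (|φ q⟩⟨φ q| * ρ). -/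
open scoped Kronecker
open Matrix

/-- The probe calibration condition (eq. (45)) holds in the von Neumann
measurement model with probe projections `|ξ_q⟩⟨ξ_q|`. -/
theorem vonNeumann_model_probe_calibration
    {n a : Type*} [Fintype n] [DecidableEq n] [Nonempty n]
    [Fintype a] [DecidableEq a] [Nonempty a]
    (φ : n → n → ℂ)
    (hφ : ∀ p q, star (φ p) ⬝ᵥ φ q = if p = q then 1 else 0)
    (ξ : a → ℂ) (hξ : star ξ ⬝ᵥ ξ = 1)
    (ξv : n → a → ℂ)
    (hξv : ∀ p q, star (ξv p) ⬝ᵥ ξv q = if p = q then 1 else 0)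
    (U : Matrix (n × a) (n × a) ℂ)
    (hU : U * Uᴴ = 1 ∧ Uᴴ * U = 1)
    (hUact : ∀ p, U.mulVec (tensorVec (φ p) ξ) = tensorVec (φ p) (ξv p)) :
    ∀ (ρ : Matrix n n ℂ) (q : n),
      (((1 : Matrix n n ℂ) ⊗ₖ outer (ξv q) (ξv q)) * U * (ρ ⊗ₖ outer ξ ξ) * Uᴴ).trace
        = (outer (φ q) (φ q) * ρ).trace := by
  intro ρ q
  set P : Matrix n n ℂ := Matrix.of (fun i p => φ p i) with hPdef
  have hPunit : Pᴴ * P = 1 := by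
    ext p p'
    simpa [Matrix.mul_apply, Matrix.one_apply, dotProduct, hPdef] using hφ p p'
  have hPunit' : P * Pᴴ = 1 := mul_eq_one_comm.mpr hPunit
  set V : Matrix (n × a) n ℂ := Matrix.of (fun ik p => φ p ik.1 * ξ ik.2) with hVdef
  set W : Matrix (n × a) n ℂ := Matrix.of (fun ik p => φ p ik.1 * ξv p ik.2) with hWdef
  set C : Matrix n n ℂ := Pᴴ * ρ * P with hCdef
  have hVMV : ∀ M : Matrix n n ℂ, V * M * Vᴴ = (P * M * Pᴴ) ⊗ₖ outer ξ ξ := by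
    intro M
    ext ik jl
    obtain ⟨i, k⟩ := ik
    obtain ⟨j, l⟩ := jl
    simp only [Matrix.mul_apply, Matrix.kroneckerMap_apply, outer, hVdef, hPdef,
      Matrix.conjTranspose_apply, Matrix.of_apply, Finset.sum_mul, Finset.mul_sum]
    refine Finset.sum_congr rfl fun p' _ => Finset.sum_congr rfl fun p _ => ?_
    push_cast [star_mul']
    ring
  have hfold : P * C * Pᴴ = ρ := by
    rw [hCdef]
    calc P * (Pᴴ * ρ * P) * Pᴴ = (P * Pᴴ) * ρ * (P * Pᴴ) := by
          simp only [Matrix.mul_assoc]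
      _ = ρ := by rw [hPunit']; simp
  have hstep1 : ρ ⊗ₖ outer ξ ξ = V * C * Vᴴ := by rw [hVMV, hfold]
  have hUV : U * V = W := by
    ext ik p
    have := congrFun (hUact p) ik
    simpa [Matrix.mul_apply, Matrix.mulVec, dotProduct, tensorVec, hVdef, hWdef,
      mul_comm] using this
  set E : Matrix n n ℂ := Matrix.of (fun p p' => if p = q ∧ p' = q then (1 : ℂ) else 0)
    with hEdef
  have hmid : ∀ (ik : n × a) (p' : n),
      (((1 : Matrix n n ℂ) ⊗ₖ outer (ξv q) (ξv q)) * W) ik p'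
        = ξv q ik.2 * φ p' ik.1 * (star (ξv q) ⬝ᵥ ξv p') := by
    intro ik p'
    obtain ⟨i, k⟩ := ik
    simp only [Matrix.mul_apply, Matrix.kroneckerMap_apply, outer, hWdef,
      Matrix.of_apply, Matrix.one_apply, dotProduct, Fintype.sum_prod_type,
      Pi.star_apply]
    rw [Finset.sum_eq_single i]
    · rw [Finset.mul_sum]
      refine Finset.sum_congr rfl fun l _ => ?_
      rw [if_pos rfl]
      ring
    · intro b _ hb
      simp [Ne.symm hb]
    · simp
  have hstep3 : Wᴴ * (((1 : Matrix n n ℂ) ⊗ₖ outer (ξv q) (ξv q)) * W) = E := by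
    ext p p'
    rw [Matrix.mul_apply]
    simp only [hmid]
    simp only [Matrix.conjTranspose_apply, hmid, hWdef, Matrix.of_apply, star_mul',
      Fintype.sum_prod_type]
    set S : ℂ := star (ξv q) ⬝ᵥ ξv p' with hSdef
    calc ∑ i : n, ∑ k : a, star (φ p i) * star (ξv p k) * (ξv q k * φ p' i * S)
        = ∑ i : n, (star (φ p i) * φ p' i) * ((star (ξv p) ⬝ᵥ ξv q) * S) := by
          refine Finset.sum_congr rfl fun i _ => ?_
          simp only [dotProduct, Pi.star_apply]
          rw [Finset.sum_mul, Finset.mul_sum]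
          refine Finset.sum_congr rfl fun k _ => ?_
          ring
      _ = (∑ i : n, star (φ p i) * φ p' i) * ((star (ξv p) ⬝ᵥ ξv q) * S) :=
          (Finset.sum_mul _ _ _).symm
      _ = (star (φ p) ⬝ᵥ φ p') * ((star (ξv p) ⬝ᵥ ξv q) * S) := by
          simp [dotProduct]
      _ = E p p' := by
          rw [hφ, hξv, hSdef, hξv, hEdef]
          simp only [Matrix.of_apply]
          by_cases h2 : p = q <;> by_cases h3 : q = p'
          · subst h2; subst h3; simp
          · subst h2; simp [h3, eq_comm]
          · subst h3; simp [h2, eq_comm]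
          · simp [h2, h3, eq_comm]
  have hCqq : (E * C).trace = C q q := by
    simp only [Matrix.trace, Matrix.diag, Matrix.mul_apply, hEdef, Matrix.of_apply]
    rw [Finset.sum_comm]
    simp [Finset.sum_ite_eq, ite_and]
  calc (((1 : Matrix n n ℂ) ⊗ₖ outer (ξv q) (ξv q)) * U * (ρ ⊗ₖ outer ξ ξ) * Uᴴ).trace
      = (((1 : Matrix n n ℂ) ⊗ₖ outer (ξv q) (ξv q)) * (W * C * Wᴴ)).trace := by
        rw [hstep1, ← hUV]
        rw [Matrix.conjTranspose_mul]
        simp only [Matrix.mul_assoc]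
    _ = ((((1 : Matrix n n ℂ) ⊗ₖ outer (ξv q) (ξv q)) * W * C) * Wᴴ).trace := by
        simp only [Matrix.mul_assoc]
    _ = (Wᴴ * (((1 : Matrix n n ℂ) ⊗ₖ outer (ξv q) (ξv q)) * W * C)).trace :=
        Matrix.trace_mul_comm _ _
    _ = ((Wᴴ * (((1 : Matrix n n ℂ) ⊗ₖ outer (ξv q) (ξv q)) * W)) * C).trace := by
        simp only [Matrix.mul_assoc]
    _ = (E * C).trace := by rw [hstep3]
    _ = C q q := hCqq
    _ = (outer (φ q) (φ q) * ρ).trace := by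
        have h1 : C q q = star (φ q) ⬝ᵥ ρ.mulVec (φ q) := by
          simp only [hCdef, hPdef, Matrix.mul_apply, Matrix.conjTranspose_apply,
            Matrix.of_apply, dotProduct, Matrix.mulVec, Pi.star_apply, Finset.sum_mul]
          rw [Finset.sum_comm]
          refine Finset.sum_congr rfl fun i _ => ?_
          rw [Finset.mul_sum]
          exact Finset.sum_congr rfl fun j _ => by ring
        have h2 : (outer (φ q) (φ q) * ρ).trace = star (φ q) ⬝ᵥ ρ.mulVec (φ q) := by
          simp only [Matrix.trace, Matrix.diag, Matrix.mul_apply, outer,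
            Matrix.of_apply, dotProduct, Matrix.mulVec, Pi.star_apply]
          rw [Finset.sum_comm]
          refine Finset.sum_congr rfl fun i _ => ?_
          rw [Finset.mul_sum]
          exact Finset.sum_congr rfl fun j _ => by ring
        rw [h1, h2]
end

section
/- Let n be a nonempty finite type and (φ p)_{p : n} an orthonormal basis of ℂ^n. Define the positive linear map T on Matrix n n ℂ by T ρ = ∑ p, |φ p⟩⟨φ p| * ρ * |φ p⟩⟨φ p|. Suppose (T p)_{p : n} is a family of positive linear maps on Matrix n n ℂ with ∑ p, T p = T and trace (T p ρ) = trace (|φ p⟩⟨φ p| * ρ) for every p and every ρ. Then for every p and every ρ, T p ρ = (trace (|φ p⟩⟨φ p| * ρ)) • |φ p⟩⟨φ p|. In particular, for any unit vector ψ : n → ℂ with ⟨φ p, ψ⟩ ≠ 0, T p |ψ⟩⟨ψ| = ‖⟨φ p, ψ⟩‖^2 • |φ p⟩⟨φ p|. -/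
set_option linter.unusedSectionVars false
set_option maxHeartbeats 1000000

open scoped ComplexOrder
open Matrix

section Helpers

variable {n : Type*} [Fintype n] [DecidableEq n]

lemma outer_apply (v w : n → ℂ) (i j : n) : outer v w i j = v i * star (w j) := rfl

lemma outer_mulVec (v w x : n → ℂ) : outer v w *ᵥ x = (star w ⬝ᵥ x) • v := by
  ext i
  simp [outer, mulVec, dotProduct, Finset.mul_sum, mul_comm, mul_left_comm]

lemma outer_mul_outer (v w a b : n → ℂ) :
    outer v w * outer a b = (star w ⬝ᵥ a) • outer v b := by
  ext i j
  simp [outer, Matrix.mul_apply, dotProduct, Finset.sum_mul, Finset.mul_sum]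
  congr 1; ext k; ring

lemma mul_outer_eq (ρ : Matrix n n ℂ) (a b : n → ℂ) :
    ρ * outer a b = outer (ρ *ᵥ a) b := by
  ext i j
  simp only [outer, Matrix.mul_apply, mulVec, dotProduct, of_apply, Finset.sum_mul]
  congr 1; ext k; ring

lemma trace_outer_mul (v w : n → ℂ) (ρ : Matrix n n ℂ) :
    (outer v w * ρ).trace = star w ⬝ᵥ (ρ *ᵥ v) := by
  simp only [Matrix.trace, Matrix.diag, Matrix.mul_apply, outer_apply, dotProduct, mulVec,
    Pi.star_apply]
  rw [Finset.sum_comm]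
  congr 1; ext k
  rw [Finset.mul_sum]
  congr 1; ext i; ring

lemma outer_conjTranspose (v w : n → ℂ) : (outer v w)ᴴ = outer w v := by
  ext i j; simp [outer, conjTranspose_apply, mul_comm]

lemma outer_posSemidef (v : n → ℂ) : (outer v v).PosSemidef := by
  refine PosSemidef.of_dotProduct_mulVec_nonneg ?_ ?_
  · exact outer_conjTranspose v v
  · intro x
    rw [outer_mulVec, dotProduct_smul, smul_eq_mul]
    have h : star x ⬝ᵥ v = star (star v ⬝ᵥ x) := by
      simp [dotProduct, mul_comm]
    rw [h]
    exact mul_star_self_nonneg _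

lemma psd_diag_nonneg {A : Matrix n n ℂ} (hA : A.PosSemidef) (i : n) : 0 ≤ A i i := by
  have h := hA.dotProduct_mulVec_nonneg (Pi.single i 1)
  simpa [dotProduct, mulVec, Pi.single_apply, Finset.sum_ite_eq, Finset.sum_ite_eq'] using h

lemma psd_trace_eq_zero {A : Matrix n n ℂ} (hA : A.PosSemidef) (h : A.trace = 0) :
    A = 0 := by
  have hd : ∀ i, A i i = 0 := by
    intro i
    have := (Finset.sum_eq_zero_iff_of_nonneg (fun i _ => psd_diag_nonneg hA i)).mp h
    exact this i (Finset.mem_univ i)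
  have hcol : ∀ i, A *ᵥ Pi.single i 1 = 0 := by
    intro i
    rw [← hA.dotProduct_mulVec_zero_iff]
    simpa [dotProduct, mulVec, Pi.single_apply, Finset.sum_ite_eq, Finset.sum_ite_eq'] using hd i
  ext i j
  have := congrFun (hcol j) i
  simpa [mulVec, dotProduct, Pi.single_apply, Finset.sum_ite_eq, Finset.sum_ite_eq'] using this

lemma psd_sandwich {u : n → ℂ} (hu : star u ⬝ᵥ u = 1) {A B : Matrix n n ℂ}
    (hA : A.PosSemidef) (hB : B.PosSemidef) (c : ℂ)
    (hAB : A + B = c • outer u u) :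
    A = A.trace • outer u u := by
  have hker : ∀ x : n → ℂ, star u ⬝ᵥ x = 0 → A *ᵥ x = 0 := by
    intro x hx
    rw [← hA.dotProduct_mulVec_zero_iff]
    have hsum : star x ⬝ᵥ (A *ᵥ x) + star x ⬝ᵥ (B *ᵥ x) = 0 := by
      have : (A + B) *ᵥ x = 0 := by
        rw [hAB, smul_mulVec, outer_mulVec, hx, zero_smul, smul_zero]
      calc star x ⬝ᵥ (A *ᵥ x) + star x ⬝ᵥ (B *ᵥ x)
          = star x ⬝ᵥ ((A + B) *ᵥ x) := by rw [add_mulVec, dotProduct_add]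
        _ = 0 := by rw [this, dotProduct_zero]
    have h1 := hA.dotProduct_mulVec_nonneg x
    have h2 := hB.dotProduct_mulVec_nonneg x
    have : star x ⬝ᵥ (A *ᵥ x) ≤ 0 := by
      have : star x ⬝ᵥ (A *ᵥ x) = -(star x ⬝ᵥ (B *ᵥ x)) := by linear_combination hsum
      rw [this]; exact neg_nonpos.mpr h2
    exact le_antisymm this h1
  set w : n → ℂ := A *ᵥ u with hw
  have hcol : ∀ i j, A i j = star (u j) * w i := by
    intro i j
    have hx : star u ⬝ᵥ (Pi.single j 1 - star (u j) • u) = 0 := by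
      rw [dotProduct_sub, dotProduct_smul, smul_eq_mul, hu, mul_one, dotProduct_single,
        Pi.star_apply, mul_one, sub_self]
    have h0 := hker _ hx
    rw [mulVec_sub, mulVec_smul, sub_eq_zero] at h0
    have := congrFun h0 i
    simpa [hw, mulVec, dotProduct, Pi.single_apply, Finset.sum_ite_eq, Finset.sum_ite_eq'] using this
  have hsym : ∀ i j, star (u j) * w i = u i * star (w j) := by
    intro i j
    have h1 : A i j = star (A j i) := by
      conv_lhs => rw [← hA.1]
      rfl
    rw [hcol i j, hcol j i] at h1
    rw [h1]; simp [mul_comm]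
  set t : ℂ := star u ⬝ᵥ w with ht
  have hstt : star t = ∑ k, star (w k) * u k := by
    rw [ht, dotProduct, star_sum]
    exact Finset.sum_congr rfl fun k _ => by simp [mul_comm]
  have hst : ∀ i, w i = u i * star t := by
    intro i
    calc w i = w i * (star u ⬝ᵥ u) := by rw [hu, mul_one]
      _ = ∑ k, (star (u k) * w i) * u k := by
          rw [dotProduct, Finset.mul_sum]
          exact Finset.sum_congr rfl fun k _ => by simp [Pi.star_apply]; ring
      _ = ∑ k, (u i * star (w k)) * u k :=
          Finset.sum_congr rfl fun k _ => by rw [hsym i k]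
      _ = u i * star t := by
          rw [hstt, Finset.mul_sum]
          exact Finset.sum_congr rfl fun k _ => by ring
  have ht' : t = ∑ k, star (u k) * w k := by rw [ht]; simp [dotProduct]
  have htt : t = star t := by
    have h2 : t = (∑ k, star (u k) * u k) * star t := by
      calc t = ∑ k, star (u k) * (u k * star t) := by
            conv_lhs => rw [ht']
            exact Finset.sum_congr rfl fun k _ => by rw [hst k]
        _ = (∑ k, star (u k) * u k) * star t := by
            rw [Finset.sum_mul]
            exact Finset.sum_congr rfl fun k _ => by ring
    have h3 : (∑ k, star (u k) * u k) = 1 := by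
      rw [← hu]; simp [dotProduct]
    rw [h3, one_mul] at h2
    exact h2
  have htr : A.trace = t := by
    rw [Matrix.trace]
    have hAt : ∀ i, A i i = star (u i) * u i * t := by
      intro i
      rw [hcol i i, hst i, ← htt]; ring
    simp_rw [Matrix.diag]
    calc ∑ i, A i i = ∑ i, star (u i) * u i * t :=
          Finset.sum_congr rfl fun i _ => hAt i
      _ = (star u ⬝ᵥ u) * t := by
          simp only [dotProduct, Pi.star_apply, Finset.sum_mul]
      _ = t := by rw [hu, one_mul]
  ext i j
  rw [hcol i j, Matrix.smul_apply, htr]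
  show star (u j) * w i = t * (u i * star (u j))
  rw [hst i, ← htt]; ring

end Helpers

/-- Section 5 of the paper: the nonselective von Neumann–Lüders operation `T`
uniquely determines the state reduction `|ψ⟩⟨ψ| ↦ |φₚ⟩⟨φₚ|`. -/
theorem luders_operation_determines_state_reduction
    {n : Type*} [Fintype n] [DecidableEq n] [Nonempty n]
    (φ : n → n → ℂ)
    (hφ : ∀ p q, star (φ p) ⬝ᵥ φ q = if p = q then 1 else 0)
    (T : Matrix n n ℂ →ₗ[ℂ] Matrix n n ℂ)
    (hT : ∀ ρ : Matrix n n ℂ,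
      T ρ = ∑ p, outer (φ p) (φ p) * ρ * outer (φ p) (φ p))
    (hT_pos : ∀ ρ : Matrix n n ℂ, ρ.PosSemidef → (T ρ).PosSemidef)
    (Tp : n → (Matrix n n ℂ →ₗ[ℂ] Matrix n n ℂ))
    (hTp_pos : ∀ p, ∀ ρ : Matrix n n ℂ, ρ.PosSemidef → (Tp p ρ).PosSemidef)
    (hsum : ∑ p, Tp p = T)
    (htr : ∀ p, ∀ ρ : Matrix n n ℂ,
      (Tp p ρ).trace = (outer (φ p) (φ p) * ρ).trace) :
    (∀ p, ∀ ρ : Matrix n n ℂ,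
        Tp p ρ = (outer (φ p) (φ p) * ρ).trace • outer (φ p) (φ p)) ∧
      (∀ ψ : n → ℂ, star ψ ⬝ᵥ ψ = 1 → ∀ p, star (φ p) ⬝ᵥ ψ ≠ 0 →
        Tp p (outer ψ ψ) = (‖star (φ p) ⬝ᵥ ψ‖ ^ 2) • outer (φ p) (φ p)) := by
  have hPP : ∀ p q, outer (φ p) (φ p) * outer (φ q) (φ q)
      = if p = q then outer (φ p) (φ p) else 0 := by
    intro p q
    rw [outer_mul_outer, hφ]
    split_ifs with h
    · subst h; rw [one_smul]
    · rw [zero_smul]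
  have hTP : ∀ q, T (outer (φ q) (φ q)) = outer (φ q) (φ q) := by
    intro q
    rw [hT]
    rw [Finset.sum_eq_single q]
    · rw [hPP q q, if_pos rfl, hPP q q, if_pos rfl]
    · intro p _ hpq
      rw [hPP p q, if_neg hpq, Matrix.zero_mul]
    · intro h; exact absurd (Finset.mem_univ q) h
  have hsum' : ∀ ρ, ∑ p, Tp p ρ = T ρ := by
    intro ρ; rw [← hsum]; simp
  have htr' : ∀ p ρ, (Tp p ρ).trace = star (φ p) ⬝ᵥ (ρ *ᵥ φ p) := by
    intro p ρ; rw [htr, trace_outer_mul]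
  have hB : ∀ p q, p ≠ q → Tp p (outer (φ q) (φ q)) = 0 := by
    intro p q hpq
    apply psd_trace_eq_zero (hTp_pos p _ (outer_posSemidef _))
    rw [htr' p, outer_mulVec, dotProduct_smul, smul_eq_mul, hφ p q, if_neg hpq, mul_zero]
  have hC : ∀ q, Tp q (outer (φ q) (φ q)) = outer (φ q) (φ q) := by
    intro q
    have h := hsum' (outer (φ q) (φ q))
    rw [hTP q, Finset.sum_eq_single q (fun p _ hpq => hB p q hpq)
      (fun h => absurd (Finset.mem_univ q) h)] at h
    exact h
  have hTpP : ∀ p q, Tp p (outer (φ q) (φ q))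
      = (if p = q then (1:ℂ) else 0) • outer (φ p) (φ p) := by
    intro p q
    rcases eq_or_ne p q with rfl | hpq
    · rw [if_pos rfl, one_smul, hC]
    · rw [if_neg hpq, zero_smul, hB p q hpq]
  -- the key off-diagonal vanishing
  have hX : ∀ q r, q ≠ r → ∀ p, Tp p (outer (φ q) (φ r)) = 0 := by
    intro q r hqr p
    set dq : ℂ := if p = q then 1 else 0 with hdq
    set dr : ℂ := if p = r then 1 else 0 with hdr
    have hdqr : dq * dr = 0 := by
      rw [hdq, hdr]; split_ifs with h1 h2
      · exact absurd (h1.symm.trans h2) hqr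
      all_goals ring
    have hdq2 : dq * dq = dq := by rw [hdq]; split_ifs <;> ring
    have hdr2 : dr * dr = dr := by rw [hdr]; split_ifs <;> ring
    have hd01q : dq = 0 ∨ dq = 1 := by rw [hdq]; split_ifs <;> simp
    have hd01r : dr = 0 ∨ dr = 1 := by rw [hdr]; split_ifs <;> simp
    have hsc1 : (dq + dr) * (dq + dr) = dq + dr := by
      rcases hd01q with h1|h1 <;> rcases hd01r with h2|h2 <;> rw [h1, h2]
      · norm_num
      · norm_num
      · norm_num
      · rw [h1, h2] at hdqr; norm_num at hdqr
    have hsc2 : (dq - Complex.I * dr) * (dq + Complex.I * dr) = dq + dr := by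
      rcases hd01q with h1|h1 <;> rcases hd01r with h2|h2 <;> rw [h1, h2]
      · norm_num
      · linear_combination -Complex.I_mul_I
      · norm_num
      · rw [h1, h2] at hdqr; norm_num at hdqr
    have huu : star (φ p) ⬝ᵥ φ p = 1 := by rw [hφ, if_pos rfl]
    -- dot products
    have e1 : star (φ p) ⬝ᵥ (φ q + φ r) = dq + dr := by
      rw [dotProduct_add, hφ, hφ]
    have e2 : star (φ q + φ r) ⬝ᵥ φ p = dq + dr := by
      rw [star_add, add_dotProduct, hφ, hφ, hdq, hdr]
      simp only [eq_comm]
    have e3 : star (φ p) ⬝ᵥ (φ q + Complex.I • φ r) = dq + Complex.I * dr := by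
      rw [dotProduct_add, dotProduct_smul, hφ, hφ, smul_eq_mul]
    have e4 : star (φ q + Complex.I • φ r) ⬝ᵥ φ p = dq - Complex.I * dr := by
      rw [star_add, star_smul, add_dotProduct, smul_dotProduct, hφ, hφ, hdq, hdr]
      simp only [eq_comm, smul_eq_mul, Complex.star_def, Complex.conj_I]
      ring
    -- outer expansions
    have ov : outer (φ q + φ r) (φ q + φ r)
        = outer (φ q) (φ q) + outer (φ q) (φ r) + outer (φ r) (φ q) + outer (φ r) (φ r) := by
      ext i j
      simp only [outer, of_apply, Matrix.add_apply, Pi.add_apply, star_add]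
      ring
    have ow : outer (φ q - φ r) (φ q - φ r)
        = outer (φ q) (φ q) - outer (φ q) (φ r) - outer (φ r) (φ q) + outer (φ r) (φ r) := by
      ext i j
      simp only [outer, of_apply, Matrix.add_apply, Matrix.sub_apply, Pi.sub_apply, star_sub]
      ring
    have ov' : outer (φ q + Complex.I • φ r) (φ q + Complex.I • φ r)
        = outer (φ q) (φ q) - Complex.I • outer (φ q) (φ r)
          + Complex.I • outer (φ r) (φ q) + outer (φ r) (φ r) := by
      ext i j
      simp only [outer, of_apply, Matrix.add_apply, Matrix.sub_apply, Matrix.smul_apply,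
        Pi.add_apply, Pi.smul_apply, star_add, star_smul, smul_eq_mul, Complex.star_def,
        _root_.map_mul, Complex.conj_I]
      linear_combination (-(φ r i * (starRingEnd ℂ) (φ r j))) * Complex.I_mul_I
    have ow' : outer (φ q - Complex.I • φ r) (φ q - Complex.I • φ r)
        = outer (φ q) (φ q) + Complex.I • outer (φ q) (φ r)
          - Complex.I • outer (φ r) (φ q) + outer (φ r) (φ r) := by
      ext i j
      simp only [outer, of_apply, Matrix.add_apply, Matrix.sub_apply, Matrix.smul_apply,
        Pi.sub_apply, Pi.smul_apply, star_sub, star_smul, smul_eq_mul, Complex.star_def,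
        _root_.map_mul, Complex.conj_I]
      linear_combination (-(φ r i * (starRingEnd ℂ) (φ r j))) * Complex.I_mul_I
    -- sandwich for v = φq + φr
    have hA : Tp p (outer (φ q + φ r) (φ q + φ r)) = (dq + dr) • outer (φ p) (φ p) := by
      have heq : Tp p (outer (φ q + φ r) (φ q + φ r))
          + Tp p (outer (φ q - φ r) (φ q - φ r))
          = (2 * (dq + dr)) • outer (φ p) (φ p) := by
        rw [← map_add, show outer (φ q + φ r) (φ q + φ r) + outer (φ q - φ r) (φ q - φ r)
            = (2:ℂ) • outer (φ q) (φ q) + (2:ℂ) • outer (φ r) (φ r) by rw [ov, ow]; module]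
        rw [map_add, _root_.map_smul, _root_.map_smul, hTpP p q, hTpP p r, ← hdq, ← hdr]
        rw [smul_smul, smul_smul, ← add_smul]
        congr 1
        ring
      have hs := psd_sandwich huu (hTp_pos p _ (outer_posSemidef _))
        (hTp_pos p _ (outer_posSemidef _)) _ heq
      rw [hs, htr' p, outer_mulVec, dotProduct_smul, smul_eq_mul, e2, e1, hsc1]
    -- sandwich for v' = φq + I φr
    have hA' : Tp p (outer (φ q + Complex.I • φ r) (φ q + Complex.I • φ r))
        = (dq + dr) • outer (φ p) (φ p) := by
      have heq : Tp p (outer (φ q + Complex.I • φ r) (φ q + Complex.I • φ r))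
          + Tp p (outer (φ q - Complex.I • φ r) (φ q - Complex.I • φ r))
          = (2 * (dq + dr)) • outer (φ p) (φ p) := by
        rw [← map_add, show outer (φ q + Complex.I • φ r) (φ q + Complex.I • φ r)
            + outer (φ q - Complex.I • φ r) (φ q - Complex.I • φ r)
            = (2:ℂ) • outer (φ q) (φ q) + (2:ℂ) • outer (φ r) (φ r) by rw [ov', ow']; module]
        rw [map_add, _root_.map_smul, _root_.map_smul, hTpP p q, hTpP p r, ← hdq, ← hdr]
        rw [smul_smul, smul_smul, ← add_smul]
        congr 1
        ring
      have hs := psd_sandwich huu (hTp_pos p _ (outer_posSemidef _))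
        (hTp_pos p _ (outer_posSemidef _)) _ heq
      rw [hs, htr' p, outer_mulVec, dotProduct_smul, smul_eq_mul, e4, e3, hsc2]
    -- conclude
    have hS : Tp p (outer (φ q) (φ r)) + Tp p (outer (φ r) (φ q)) = 0 := by
      have h := hA
      rw [ov, map_add, map_add, map_add, hTpP p q, hTpP p r, ← hdq, ← hdr, add_smul] at h
      calc Tp p (outer (φ q) (φ r)) + Tp p (outer (φ r) (φ q))
          = dq • outer (φ p) (φ p) + Tp p (outer (φ q) (φ r)) + Tp p (outer (φ r) (φ q))
            + dr • outer (φ p) (φ p) - (dq • outer (φ p) (φ p) + dr • outer (φ p) (φ p)) := by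
            abel
        _ = 0 := by rw [h]; abel
    have hD : Tp p (outer (φ q) (φ r)) = Tp p (outer (φ r) (φ q)) := by
      have h := hA'
      rw [ov', map_add, map_add, map_sub, _root_.map_smul, _root_.map_smul, hTpP p q, hTpP p r,
        ← hdq, ← hdr, add_smul] at h
      have h2 : Complex.I • Tp p (outer (φ r) (φ q))
          - Complex.I • Tp p (outer (φ q) (φ r)) = 0 := by
        calc Complex.I • Tp p (outer (φ r) (φ q)) - Complex.I • Tp p (outer (φ q) (φ r))
            = dq • outer (φ p) (φ p) - Complex.I • Tp p (outer (φ q) (φ r))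
              + Complex.I • Tp p (outer (φ r) (φ q)) + dr • outer (φ p) (φ p)
              - (dq • outer (φ p) (φ p) + dr • outer (φ p) (φ p)) := by abel
          _ = 0 := by rw [h]; abel
      rw [← smul_sub, smul_eq_zero] at h2
      rcases h2 with h2 | h2
      · exact absurd h2 Complex.I_ne_zero
      · exact (sub_eq_zero.mp h2).symm
    rw [← hD] at hS
    have h2 : (2:ℂ) • Tp p (outer (φ q) (φ r)) = 0 := by
      rw [two_smul]; exact hS
    rcases smul_eq_zero.mp h2 with h3 | h3
    · exact absurd h3 two_ne_zero
    · exact h3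
  -- key formula on the basis
  have key : ∀ p q r, Tp p (outer (φ q) (φ r))
      = ((if p = q then (1:ℂ) else 0) * (if p = r then (1:ℂ) else 0)) • outer (φ p) (φ p) := by
    intro p q r
    rcases eq_or_ne q r with rfl | hqr
    · rw [hTpP p q]
      congr 1
      split_ifs <;> ring
    · rw [hX q r hqr p]
      have : (if p = q then (1:ℂ) else 0) * (if p = r then (1:ℂ) else 0) = 0 := by
        split_ifs with h1 h2
        · exact absurd (h1.symm.trans h2) hqr
        all_goals ring
      rw [this, zero_smul]
  -- completeness of the basis
  have hone : (∑ q, outer (φ q) (φ q)) = (1 : Matrix n n ℂ) := by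
    set U : Matrix n n ℂ := Matrix.of fun i q => φ q i with hU
    have hUU : Uᴴ * U = 1 := by
      ext p q
      have := hφ p q
      simpa [Matrix.mul_apply, conjTranspose_apply, dotProduct, Matrix.one_apply, hU] using this
    have hU2 : U * Uᴴ = 1 := mul_eq_one_comm.mp hUU
    ext i j
    have h := congrFun (congrFun hU2 i) j
    simpa [Matrix.mul_apply, conjTranspose_apply, Matrix.sum_apply, outer_apply, hU,
      Matrix.one_apply] using h
  have hexp : ∀ ρ : Matrix n n ℂ,
      ρ = ∑ q, ∑ r, (star (φ q) ⬝ᵥ (ρ *ᵥ φ r)) • outer (φ q) (φ r) := by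
    intro ρ
    calc ρ = (∑ q, outer (φ q) (φ q)) * ρ * (∑ r, outer (φ r) (φ r)) := by
          rw [hone, Matrix.one_mul, Matrix.mul_one]
      _ = ∑ q, ∑ r, outer (φ q) (φ q) * ρ * outer (φ r) (φ r) := by
          rw [Finset.sum_mul, Finset.sum_mul]
          exact Finset.sum_congr rfl fun q _ => Finset.mul_sum _ _ _
      _ = ∑ q, ∑ r, (star (φ q) ⬝ᵥ (ρ *ᵥ φ r)) • outer (φ q) (φ r) := by
          exact Finset.sum_congr rfl fun q _ => Finset.sum_congr rfl fun r _ => by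
            rw [Matrix.mul_assoc, mul_outer_eq, outer_mul_outer]
  -- first conjunct
  have main : ∀ p, ∀ ρ : Matrix n n ℂ,
      Tp p ρ = (outer (φ p) (φ p) * ρ).trace • outer (φ p) (φ p) := by
    intro p ρ
    conv_lhs => rw [hexp ρ]
    rw [map_sum]
    have hterm : ∀ q, Tp p (∑ r, (star (φ q) ⬝ᵥ (ρ *ᵥ φ r)) • outer (φ q) (φ r))
        = (if p = q then (1:ℂ) else 0) • ((star (φ q) ⬝ᵥ (ρ *ᵥ φ p)) • outer (φ p) (φ p)) := by
      intro q
      rw [map_sum]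
      rw [Finset.sum_eq_single p]
      · rw [_root_.map_smul, key p q p, if_pos rfl, mul_one, smul_smul, smul_smul, mul_comm]
      · intro r _ hrp
        rw [_root_.map_smul, key p q r,
          show (if p = r then (1:ℂ) else 0) = 0 from if_neg (fun h => hrp h.symm),
          mul_zero, zero_smul, smul_zero]
      · intro h; exact absurd (Finset.mem_univ p) h
    rw [Finset.sum_congr rfl fun q _ => hterm q]
    rw [Finset.sum_eq_single p]
    · rw [if_pos rfl, one_smul, trace_outer_mul]
    · intro q _ hqp
      rw [if_neg (fun h => hqp h.symm), zero_smul]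
    · intro h; exact absurd (Finset.mem_univ p) h
  refine ⟨main, ?_⟩
  intro ψ hψ p hne
  rw [main p]
  have htrv : (outer (φ p) (φ p) * outer ψ ψ).trace
      = star (star (φ p) ⬝ᵥ ψ) * (star (φ p) ⬝ᵥ ψ) := by
    rw [trace_outer_mul, outer_mulVec, dotProduct_smul, smul_eq_mul]
    congr 1
    simp [dotProduct, mul_comm]
  rw [htrv]
  ext i j
  simp only [Matrix.smul_apply, smul_eq_mul, Complex.real_smul]
  congr 1
  rw [Complex.star_def, mul_comm, Complex.mul_conj, Complex.normSq_eq_norm_sq]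
end
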